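/- arXiv:0803.0491 — 11 statements merged into one kernel-verified Lean document; each statement's English description precedes it below -/
import Mathlib

section
/- Let x = (a_1,...,a_n) and y = (b_1,...,b_n) be rook-monoid sequences with indices i < j such that b_i = a_j, b_j = a_i, b_j < b_i, and a_k = b_k for all k ∉ {i,j}. Then ℓ(y) = ℓ(x) + 1 if and only if for every s with i < s < j, either a_s > a_j or a_s < a_i. -/
/-- coinv: number of pairs i < j with 0 < a i < a j. -/
def coinv (n : ℕ) (a : Fin n → ℕ) : ℕ :=
  (Finset.univ.filter (fun p : Fin n × Fin n => p.1 < p.2 ∧ 0 < a p.1 ∧ a p.1 < a p.2)).card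

/-- Length of a rook-monoid sequence: ∑_{i : a_i ≠ 0} (a_i + n - i) - coinv (1-based i). -/
def rookLen (n : ℕ) (a : Fin n → ℕ) : ℤ :=
  (∑ i : Fin n, if a i ≠ 0 then ((a i : ℤ) + n - (i.val + 1)) else 0) - coinv n a

/-- A rook-monoid sequence: entries in {0,...,n} with distinct nonzero entries. -/
def IsRook (n : ℕ) (a : Fin n → ℕ) : Prop :=
  (∀ i, a i ≤ n) ∧ ∀ i j : Fin n, i ≠ j → a i ≠ 0 → a i ≠ a j

/-- Non-increasing rearrangement of a list. -/
def sortDesc (l : List ℕ) : List ℕ := l.insertionSort (· ≥ ·)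

/-- Containment order: entrywise comparison of non-increasing rearrangements. -/
def contLE (l m : List ℕ) : Prop := List.Forall₂ (· ≤ ·) (sortDesc l) (sortDesc m)

/-- Deodhar order: containment of all truncations. -/
def deodharLE (n : ℕ) (x y : Fin n → ℕ) : Prop :=
  ∀ k : ℕ, k ≤ n → contLE ((List.ofFn x).take k) ((List.ofFn y).take k)

/-!
Write `ℓ = P - coinv`, where `P` sums `a k + n - (k + 1)` over the nonzero entries, and note
`b = a ∘ swap i j`. Then `P` changes only at the positions `i, j`: by `j - i` if `a i = 0`, and
not at all otherwise. Pairs avoiding `i` and `j` are coinversions of `a` and `b` alike; the pair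
`(i, j)` stops being one (if `a i ≠ 0`); a third position `t` paired with `i` and `j` changes
nothing unless `i < t < j`, in which case it changes `coinv` by `[a i = 0] - swapExcess a i j t`.
The bookkeeping collapses to `ℓ(b) = ℓ(a) + 1 + ∑_{i<t<j} swapExcess a i j t`, with
nonnegative summands that vanish exactly when `a t ∉ [a i, a j]`.
-/

open Finset
open Equiv (swap swap_apply_left swap_apply_right swap_apply_of_ne_of_ne)

theorem Fintype.sum_eq_add_add_sum_compl_pair {ι M : Type*} [Fintype ι] [DecidableEq ι]
    [AddCommMonoid M] (f : ι → M) {i j : ι} (hij : i ≠ j) :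
    ∑ k, f k = f i + f j + ∑ k ∈ {i, j}ᶜ, f k := by
  rw [← sum_pair hij, sum_add_sum_compl]

theorem Fintype.sum_sum_eq_of_eq_zero_off_pair {ι M : Type*} [Fintype ι] [DecidableEq ι]
    [AddCommMonoid M] (H : ι → ι → M) {i j : ι} (hij : i ≠ j)
    (hH : ∀ s t, s ∉ ({i, j} : Finset ι) → t ∉ ({i, j} : Finset ι) → H s t = 0) :
    ∑ s, ∑ t, H s t = H i i + H i j + H j i + H j j +
      ∑ t ∈ {i, j}ᶜ, (H i t + H j t + H t i + H t j) := by
  have hrow : ∀ s ∈ ({i, j} : Finset ι)ᶜ, ∑ t, H s t = H s i + H s j := fun s hs => by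
    rw [Fintype.sum_eq_add_add_sum_compl_pair _ hij,
      Finset.sum_eq_zero fun t ht => hH s t (mem_compl.1 hs) (mem_compl.1 ht), add_zero]
  rw [Fintype.sum_eq_add_add_sum_compl_pair _ hij, Finset.sum_congr rfl hrow,
    Fintype.sum_eq_add_add_sum_compl_pair (H i) hij,
    Fintype.sum_eq_add_add_sum_compl_pair (H j) hij]
  simp only [Finset.sum_add_distrib]
  abel

theorem Equiv.swap_apply_of_notMem_pair {α : Type*} [DecidableEq α] {i j k : α}
    (hk : k ∉ ({i, j} : Finset α)) : swap i j k = k := by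
  simp only [mem_insert, mem_singleton, not_or] at hk
  exact swap_apply_of_ne_of_ne hk.1 hk.2

def coinvTerm {n : ℕ} (a : Fin n → ℕ) (s t : Fin n) : ℤ :=
  if s < t ∧ 0 < a s ∧ a s < a t then 1 else 0

theorem coinvTerm_of_le {n : ℕ} (a : Fin n → ℕ) {s t : Fin n} (h : t ≤ s) :
    coinvTerm a s t = 0 :=
  if_neg fun hlt => (not_lt_of_ge h) hlt.1

theorem coinv_eq_sum_coinvTerm (n : ℕ) (a : Fin n → ℕ) :
    (coinv n a : ℤ) = ∑ s, ∑ t, coinvTerm a s t := by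
  rw [coinv, card_filter]
  push_cast
  rw [Fintype.sum_prod_type]
  rfl

theorem rookLen_add_coinv (n : ℕ) (a : Fin n → ℕ) :
    rookLen n a + coinv n a =
      ∑ k : Fin n, if a k ≠ 0 then ((a k : ℤ) + n - (k.val + 1)) else 0 := by
  rw [rookLen, sub_add_cancel]

def swapExcess {n : ℕ} (a : Fin n → ℕ) (i j t : Fin n) : ℤ :=
  if a i ≤ a t ∧ a t ≤ a j then (if a t = 0 then 1 else 2) else 0

theorem swapExcess_nonneg {n : ℕ} (a : Fin n → ℕ) (i j t : Fin n) :
    0 ≤ swapExcess a i j t := by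
  unfold swapExcess
  split_ifs <;> norm_num

theorem swapExcess_eq_zero_iff {n : ℕ} {a : Fin n → ℕ} {i j t : Fin n} :
    swapExcess a i j t = 0 ↔ a j < a t ∨ a t < a i := by
  unfold swapExcess
  split_ifs <;> omega

section Swap

variable {n : ℕ} {a : Fin n → ℕ} {i j : Fin n}

theorem rookLen_add_coinv_comp_swap (hij : i < j) (hj : a j ≠ 0) :
    rookLen n (a ∘ swap i j) + coinv n (a ∘ swap i j) =
      rookLen n a + coinv n a + if a i = 0 then (j.val - i.val : ℤ) else 0 := by
  simp only [rookLen_add_coinv, Fintype.sum_eq_add_add_sum_compl_pair _ hij.ne]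
  rw [sum_congr rfl fun k hk => by
    rw [Function.comp_apply, Equiv.swap_apply_of_notMem_pair (mem_compl.1 hk)]]
  simp only [Function.comp_apply, swap_apply_left, swap_apply_right, hj, ne_eq, not_false_eq_true,
    if_true]
  by_cases hi : a i = 0 <;> simp only [hi, not_true_eq_false, not_false_eq_true, if_true,
    if_false] <;> ring

theorem coinvTerm_comp_swap_cross (ha : IsRook n a) (hij : i < j) (hlt : a i < a j) {t : Fin n}
    (ht : t ∉ ({i, j} : Finset (Fin n))) :
    (coinvTerm (a ∘ swap i j) i t - coinvTerm a i t)
      + (coinvTerm (a ∘ swap i j) j t - coinvTerm a j t)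
      + (coinvTerm (a ∘ swap i j) t i - coinvTerm a t i)
      + (coinvTerm (a ∘ swap i j) t j - coinvTerm a t j) =
      if i < t ∧ t < j then (if a i = 0 then 1 else 0) - swapExcess a i j t else 0 := by
  obtain ⟨hti, htj⟩ : t ≠ i ∧ t ≠ j := by
    simpa only [mem_insert, mem_singleton, not_or] using ht
  have hjt : a j ≠ a t := ha.2 j t htj.symm (by omega)
  have hit : a i ≠ 0 → a i ≠ a t := ha.2 i t hti.symm
  have hij_val : (i : ℕ) < j := hij
  have hti' : (t : ℕ) ≠ i := Fin.val_ne_of_ne hti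
  have htj' : (t : ℕ) ≠ j := Fin.val_ne_of_ne htj
  simp only [coinvTerm, swapExcess, Function.comp_apply, swap_apply_left, swap_apply_right,
    Equiv.swap_apply_of_notMem_pair ht, Fin.lt_def]
  rcases lt_or_gt_of_ne hti' with hlo | hlo
  · simp only [hlo, hlo.trans hij_val, not_lt_of_gt, false_and, if_false]
    split_ifs <;> omega
  rcases lt_or_gt_of_ne htj' with hhi | hhi
  · simp only [hlo, hhi, not_lt_of_gt, true_and, false_and, and_true, if_false, if_true]
    split_ifs <;> omega
  · simp only [hhi, hij_val.trans hhi, not_lt_of_gt, true_and, and_false, if_false]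
    split_ifs <;> omega

theorem coinv_comp_swap (ha : IsRook n a) (hij : i < j) (hlt : a i < a j) :
    (coinv n (a ∘ swap i j) : ℤ) = coinv n a - (if a i = 0 then 0 else 1) +
      ∑ t ∈ Ioo i j, ((if a i = 0 then 1 else 0) - swapExcess a i j t) := by
  have hoff : ∀ s t, s ∉ ({i, j} : Finset (Fin n)) → t ∉ ({i, j} : Finset (Fin n)) →
      coinvTerm (a ∘ swap i j) s t - coinvTerm a s t = 0 := fun s t hs ht => by
    rw [coinvTerm, Function.comp_apply, Function.comp_apply, Equiv.swap_apply_of_notMem_pair hs,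
      Equiv.swap_apply_of_notMem_pair ht, coinvTerm, sub_self]
  have hIoo : ({i, j} : Finset (Fin n))ᶜ.filter (fun t => i < t ∧ t < j) = Ioo i j := by
    ext t
    simp only [mem_filter, mem_compl, mem_insert, mem_singleton, not_or, mem_Ioo]
    exact ⟨And.right, fun h => ⟨⟨h.1.ne', h.2.ne⟩, h⟩⟩
  have hij_term :
      coinvTerm (a ∘ swap i j) i j - coinvTerm a i j = -(if a i = 0 then 0 else 1) := by
    by_cases hi : a i = 0 <;> simp [coinvTerm, hij, hi, hlt, hlt.le.not_gt]
  have hsum := Fintype.sum_sum_eq_of_eq_zero_off_pair _ hij.ne hoff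
  rw [Finset.sum_congr rfl fun t ht => coinvTerm_comp_swap_cross ha hij hlt (mem_compl.1 ht),
    ← Finset.sum_filter, hIoo, hij_term] at hsum
  simp only [coinvTerm_of_le _ le_rfl, coinvTerm_of_le _ hij.le, sub_self, Finset.sum_sub_distrib]
    at hsum
  rw [coinv_eq_sum_coinvTerm, coinv_eq_sum_coinvTerm, Finset.sum_sub_distrib]
  linear_combination hsum

theorem rookLen_comp_swap (ha : IsRook n a) (hij : i < j) (hlt : a i < a j) :
    rookLen n (a ∘ swap i j) = rookLen n a + 1 + ∑ t ∈ Ioo i j, swapExcess a i j t := by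
  have hpos := rookLen_add_coinv_comp_swap (a := a) hij (by omega)
  have hcoinv := coinv_comp_swap ha hij hlt
  have hcard : (#(Ioo i j) : ℤ) = j.val - i.val - 1 := by
    rw [Fin.card_Ioo]
    have : (i : ℕ) < j := hij
    omega
  rw [Finset.sum_sub_distrib, sum_const, nsmul_eq_mul] at hcoinv
  by_cases hi : a i = 0 <;> simp only [hi, if_true, if_false, mul_one, mul_zero] at hpos hcoinv <;>
    linarith

end Swap

theorem covering_swap_general (n : ℕ) (a b : Fin n → ℕ) (ha : IsRook n a)
    (i j : Fin n) (hij : i < j) (h1 : b i = a j) (h2 : b j = a i) (h3 : b j < b i)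
    (hne : ∀ k, k ≠ i → k ≠ j → a k = b k) :
    rookLen n b = rookLen n a + 1 ↔
      ∀ s : Fin n, i < s → s < j → (a j < a s ∨ a s < a i) := by
  have hlt : a i < a j := h2 ▸ h1 ▸ h3
  have hb : b = a ∘ swap i j := funext fun k => by
    by_cases hki : k = i
    · simp [hki, h1]
    by_cases hkj : k = j
    · simp [hkj, h2]
    simp [swap_apply_of_ne_of_ne hki hkj, hne k hki hkj]
  rw [hb, rookLen_comp_swap ha hij hlt, add_eq_left,
    sum_eq_zero_iff_of_nonneg fun t _ => swapExcess_nonneg a i j t]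
  simp only [mem_Ioo, swapExcess_eq_zero_iff, and_imp]

theorem covering_swap (n : ℕ) (a b : Fin n → ℕ) (ha : IsRook n a) (hb : IsRook n b)
    (i j : Fin n) (hij : i < j) (h1 : b i = a j) (h2 : b j = a i) (h3 : b j < b i)
    (hne : ∀ k, k ≠ i → k ≠ j → a k = b k) :
    rookLen n b = rookLen n a + 1 ↔
      ∀ s : Fin n, i < s → s < j → (a j < a s ∨ a s < a i) :=
  covering_swap_general n a b ha i j hij h1 h2 h3 hne
end

section
/- If (a_1,...,a_n) ≤_D (b_1,...,b_n) in the Deodhar order, then for any k ≤ n and any nonnegative integers c_{k+1},...,c_m, one has (a_1,...,a_k,c_{k+1},...,c_m) ≤_D (b_1,...,b_k,c_{k+1},...,c_m). -/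
/-- Deodhar order on lists: containment of all truncations. -/
def deodharLEList (l m : List ℕ) : Prop := ∀ k : ℕ, contLE (l.take k) (m.take k)

/-!
Comparing non-increasing rearrangements entrywise is the same as comparing, for every threshold
`t`, how many entries exceed `t` (for lists of equal length). These counts are additive under
`++`, so appending a common list `c` preserves the containment order. A truncation of
`a.take k ++ c` is `a.take (min j k) ++ c.take (j - k)`, and `a.take (min j k)` is contained in
`b.take (min j k)` by hypothesis.
-/

section CountGT

variable {α : Type*} [LinearOrder α]

def countGT (t : α) (l : List α) : ℕ := l.countP (t < ·)

lemma countGT_cons (t a : α) (l : List α) :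
    countGT t (a :: l) = countGT t l + if t < a then 1 else 0 := by
  simp [countGT, List.countP_cons]

lemma countGT_append (t : α) (l m : List α) : countGT t (l ++ m) = countGT t l + countGT t m :=
  List.countP_append ..

lemma List.Perm.countGT_eq {l m : List α} (h : l.Perm m) (t : α) : countGT t l = countGT t m :=
  h.countP_eq _

lemma countGT_eq_zero_of_forall_le {t : α} {l : List α} (h : ∀ x ∈ l, x ≤ t) :
    countGT t l = 0 :=
  List.countP_eq_zero.mpr fun x hx => by simpa using h x hx

lemma List.Forall₂.countGT_le {s u : List α} (h : List.Forall₂ (· ≤ ·) s u) (t : α) :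
    countGT t s ≤ countGT t u := by
  induction h with
  | nil => rfl
  | @cons a b s u hab _ ih =>
    rw [countGT_cons, countGT_cons]
    gcongr
    split_ifs with ha hb hb <;> first | omega | exact absurd (ha.trans_le hab) hb

lemma forall₂_le_of_countGT_le {s u : List α} (hs : s.Pairwise (· ≥ ·)) (hu : u.Pairwise (· ≥ ·))
    (hlen : s.length = u.length) (hcount : ∀ t, countGT t s ≤ countGT t u) :
    List.Forall₂ (· ≤ ·) s u := by
  induction s generalizing u with
  | nil => rw [List.eq_nil_of_length_eq_zero hlen.symm]; exact .nil
  | cons a s ih =>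
    obtain _ | ⟨b, u⟩ := u
    · simp at hlen
    rw [List.pairwise_cons] at hs hu
    have hab : a ≤ b := by
      by_contra! hba
      have := hcount b
      rw [countGT_cons, countGT_cons, countGT_eq_zero_of_forall_le hu.1] at this
      simp [hba] at this
    refine .cons hab (ih hs.2 hu.2 (by simpa using hlen) fun t => ?_)
    have := hcount t
    rw [countGT_cons, countGT_cons] at this
    by_cases hta : t < a
    · simp only [hta, hta.trans_le hab, if_true] at this
      omega
    · rw [countGT_eq_zero_of_forall_le fun x hx => (hs.1 x hx).trans (not_lt.mp hta)]
      exact Nat.zero_le _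

end CountGT

lemma contLE_iff_countGT {l m : List ℕ} :
    contLE l m ↔ l.length = m.length ∧ ∀ t, countGT t l ≤ countGT t m := by
  have hperm (l : List ℕ) : (sortDesc l).Perm l := List.perm_insertionSort _ l
  have hsorted (l : List ℕ) : (sortDesc l).Pairwise (· ≥ ·) := List.pairwise_insertionSort _ l
  constructor
  · intro h
    refine ⟨(hperm l).symm.length_eq.trans (h.length_eq.trans (hperm m).length_eq), fun t => ?_⟩
    rw [← (hperm l).countGT_eq, ← (hperm m).countGT_eq]
    exact h.countGT_le t
  · rintro ⟨hlen, hcount⟩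
    refine forall₂_le_of_countGT_le (hsorted l) (hsorted m) ?_ fun t => ?_
    · simpa [sortDesc] using hlen
    · rw [(hperm l).countGT_eq, (hperm m).countGT_eq]
      exact hcount t

lemma contLE.append_right {l m : List ℕ} (h : contLE l m) (c : List ℕ) :
    contLE (l ++ c) (m ++ c) := by
  rw [contLE_iff_countGT] at h ⊢
  refine ⟨by simp [h.1], fun t => ?_⟩
  rw [countGT_append, countGT_append]
  exact Nat.add_le_add_right (h.2 t) _

lemma take_take_append {α : Type*} {l : List α} {k : ℕ} (hk : k ≤ l.length) (c : List α) (j : ℕ) :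
    (l.take k ++ c).take j = l.take (min j k) ++ c.take (j - k) := by
  rw [List.take_append, List.take_take, List.length_take_of_le hk]

theorem deodhar_truncate_append (n : ℕ) (a b : Fin n → ℕ) (h : deodharLE n a b)
    (k : ℕ) (hk : k ≤ n) (c : List ℕ) :
    deodharLEList ((List.ofFn a).take k ++ c) ((List.ofFn b).take k ++ c) := by
  intro j
  rw [take_take_append (by simpa using hk), take_take_append (by simpa using hk)]
  exact (h _ ((min_le_right j k).trans hk)).append_right _
end

section
/- Let x = (a_1,...,a_n) and z = (c_1,...,c_n) be rook-monoid sequences that agree at all positions except i < r, where c_i = a_r, c_r = a_i, and a_r > a_i. Then x <_D z strictly in the Deodhar order. -/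
/-! Truncating after k entries, the swapped sequence is the original one (k ≤ i), the original one
with a_i raised to a_r (i < k ≤ r), or a permutation of it (r < k). Containment ignores
permutations, and raising one entry can only raise the sorted list entrywise, because inserting a
larger element into a sorted list yields an entrywise larger sorted list. -/

theorem List.forall₂_orderedInsert_of_le {α : Type*} [LinearOrder α] {x y : α} (hxy : x ≤ y)
    {s : List α} (hs : s.Pairwise (· ≥ ·)) :
    Forall₂ (· ≤ ·) (s.orderedInsert (· ≥ ·) x) (s.orderedInsert (· ≥ ·) y) := by
  induction s generalizing x y with
  | nil => exact .cons hxy .nil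
  | cons a s ih =>
    obtain ⟨has, hs⟩ := pairwise_cons.mp hs
    by_cases hxa : a ≤ x
    · rw [orderedInsert_cons_of_le (· ≥ ·) _ hxa,
        orderedInsert_cons_of_le (· ≥ ·) _ (hxa.trans hxy)]
      exact .cons hxy (forall₂_same.2 fun _ _ => le_rfl)
    rw [orderedInsert_of_not_le (· ≥ ·) _ hxa]
    by_cases hya : a ≤ y
    · have hinsert_a : s.orderedInsert (· ≥ ·) a = a :: s := by
        cases s with
        | nil => rfl
        | cons b s => exact orderedInsert_cons_of_le (· ≥ ·) _ (has b mem_cons_self)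
      rw [orderedInsert_cons_of_le (· ≥ ·) _ hya]
      exact .cons hya (hinsert_a ▸ ih (le_of_not_ge hxa) hs)
    · rw [orderedInsert_of_not_le (· ≥ ·) _ hya]
      exact .cons le_rfl (ih hxy hs)

theorem List.ofFn_comp_swap {α : Type*} {n : ℕ} (f : Fin n → α) (i r : Fin n) :
    ofFn (f ∘ Equiv.swap i r) = ((ofFn f).set i (f r)).set r (f i) := by
  refine ext_getElem (by simp) fun k hk _ => ?_
  simp only [getElem_set, List.getElem_ofFn, Function.comp_apply, Equiv.swap_apply_def]
  grind

theorem sortDesc_eq_of_perm {l m : List ℕ} (h : l.Perm m) : sortDesc l = sortDesc m :=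
  (((List.perm_insertionSort _ l).trans h).trans (List.perm_insertionSort _ m).symm).eq_of_pairwise'
    (List.pairwise_insertionSort _ l) (List.pairwise_insertionSort _ m)

theorem contLE_of_perm {l m : List ℕ} (h : l.Perm m) : contLE l m := by
  rw [contLE, sortDesc_eq_of_perm h]
  exact List.forall₂_same.2 fun _ _ => le_rfl

theorem contLE_cons_of_le {x y : ℕ} (hxy : x ≤ y) (l : List ℕ) : contLE (x :: l) (y :: l) :=
  List.forall₂_orderedInsert_of_le hxy (List.pairwise_insertionSort _ l)

theorem contLE_set_of_le {l : List ℕ} {j : ℕ} (hj : j < l.length) {y : ℕ} (hy : l[j] ≤ y) :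
    contLE l (l.set j y) := by
  have hl : l.take j ++ l[j] :: l.drop (j + 1) = l := by
    rw [List.getElem_cons_drop, List.take_append_drop]
  have hset : l.take j ++ y :: l.drop (j + 1) = l.set j y := by
    rw [List.set_eq_take_append_cons_drop, if_pos hj]
  have h := contLE_cons_of_le hy (l.take j ++ l.drop (j + 1))
  rwa [contLE, ← sortDesc_eq_of_perm List.perm_middle, ← sortDesc_eq_of_perm List.perm_middle, hl,
    hset] at h

theorem Function.eq_comp_swap_of_apply {α β : Type*} [DecidableEq α] {f g : α → β} {i r : α}
    (hi : g i = f r) (hr : g r = f i) (h : ∀ k, k ≠ i → k ≠ r → g k = f k) :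
    g = f ∘ Equiv.swap i r := by
  funext k
  by_cases hki : k = i
  · simp [hki, hi]
  by_cases hkr : k = r
  · simp [hkr, hr]
  simp [Equiv.swap_apply_of_ne_of_ne hki hkr, h k hki hkr]

theorem deodharLE_comp_swap {n : ℕ} (a : Fin n → ℕ) {i r : Fin n} (hir : i < r)
    (hle : a i ≤ a r) : deodharLE n a (a ∘ Equiv.swap i r) := by
  intro k hk
  rw [List.ofFn_comp_swap, List.take_set, List.take_set]
  set l := (List.ofFn a).take k
  have hl : l.length = k := by simp [l, hk]
  have hget (j : Fin n) (hj : j.val < k) : l[j.val]'(hl ▸ hj) = a j := by simp [l]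
  rcases lt_or_ge r.val k with hrk | hkr
  · have hik : i.val < k := (Fin.lt_def.mp hir).trans hrk
    rw [← hget i hik, ← hget r hrk]
    exact contLE_of_perm (List.set_set_perm (hl ▸ hik) (hl ▸ hrk)).symm
  rw [List.set_eq_of_length_le (by simpa [hl] using hkr)]
  rcases lt_or_ge i.val k with hik | hki
  · exact contLE_set_of_le (hl ▸ hik) (hget i hik ▸ hle)
  · rw [List.set_eq_of_length_le (hl ▸ hki)]
    exact contLE_of_perm (.refl l)

theorem swap_increases_deodhar_general (n : ℕ) (a c : Fin n → ℕ) (i r : Fin n) (hir : i < r)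
    (h1 : c i = a r) (h2 : c r = a i)
    (h3 : ∀ k, k ≠ i → k ≠ r → c k = a k) (hlt : a i < a r) :
    deodharLE n a c ∧ a ≠ c := by
  refine ⟨?_, fun hac => hlt.ne (by rw [← h1, hac])⟩
  rw [Function.eq_comp_swap_of_apply h1 h2 h3]
  exact deodharLE_comp_swap a hir hlt.le

theorem swap_increases_deodhar (n : ℕ) (a c : Fin n → ℕ) (ha : IsRook n a)
    (hc : IsRook n c) (i r : Fin n) (hir : i < r) (h1 : c i = a r) (h2 : c r = a i)
    (h3 : ∀ k, k ≠ i → k ≠ r → c k = a k) (hlt : a i < a r) :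
    deodharLE n a c ∧ a ≠ c :=
  swap_increases_deodhar_general n a c i r hir h1 h2 h3 hlt
end

section
/- Let x, y, z be tuples of nonnegative integers of length n such that x and y have the same multiset of entries (equal non-increasing rearrangements). If x ≤_D z ≤_D y in the Deodhar order, then z has the same multiset of entries as x and y. -/
theorem sandwich_same_multiset (n : ℕ) (x y z : Fin n → ℕ)
    (hxy : sortDesc (List.ofFn x) = sortDesc (List.ofFn y))
    (h1 : deodharLE n x z) (h2 : deodharLE n z y) :
    sortDesc (List.ofFn z) = sortDesc (List.ofFn x) := by
  have hxz := h1 n le_rfl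
  have hzy := h2 n le_rfl
  simp only [List.take_of_length_le (by simp : (List.ofFn x).length ≤ n),
    List.take_of_length_le (by simp : (List.ofFn y).length ≤ n),
    List.take_of_length_le (by simp : (List.ofFn z).length ≤ n)] at hxz hzy
  unfold contLE at hxz hzy
  rw [← hxy] at hzy
  -- antisymmetry of Forall₂ (≤)
  clear h1 h2 hxy
  generalize sortDesc (List.ofFn z) = a at *
  generalize sortDesc (List.ofFn x) = b at *
  induction hzy with
  | nil => rfl
  | cons h t ih =>
    cases hxz with
    | cons h' t' => exact congrArg₂ List.cons (le_antisymm h h') (ih t')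
end

section
/- Let x = (a_1,...,a_n), y = (b_1,...,b_n), z = (c_1,...,c_n) be tuples of nonnegative integers with x ≤_D z ≤_D y. If the first n−1 entries of x, y, z all have the same non-increasing rearrangement and a_n = b_n, then c_n = a_n. -/
lemma sum_sortDesc (l : List ℕ) : (sortDesc l).sum = l.sum :=
  (List.perm_insertionSort _ l).sum_eq

lemma sum_eq_of_sortDesc_eq {l m : List ℕ} (h : sortDesc l = sortDesc m) : l.sum = m.sum := by
  rw [← sum_sortDesc l, h, sum_sortDesc]

lemma contLE.sum_le {l m : List ℕ} (h : contLE l m) : l.sum ≤ m.sum := by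
  simpa only [sum_sortDesc] using h.sum_le_sum

lemma deodharLE.sum_le {n : ℕ} {x y : Fin n → ℕ} (h : deodharLE n x y) :
    (List.ofFn x).sum ≤ (List.ofFn y).sum := by
  have h_full := (h n le_rfl).sum_le
  rwa [List.take_of_length_le (by simp), List.take_of_length_le (by simp)] at h_full

lemma sum_ofFn_eq_sum_take_add_last (n : ℕ) (x : Fin (n + 1) → ℕ) :
    (List.ofFn x).sum = ((List.ofFn x).take n).sum + x (Fin.last n) := by
  rw [List.ofFn_succ', List.concat_eq_append]
  simp [List.take_left']

theorem sandwich_last_entry (n : ℕ) (x y z : Fin (n + 1) → ℕ)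
    (h1 : deodharLE (n + 1) x z) (h2 : deodharLE (n + 1) z y)
    (hxy : sortDesc ((List.ofFn x).take n) = sortDesc ((List.ofFn y).take n))
    (hxz : sortDesc ((List.ofFn z).take n) = sortDesc ((List.ofFn x).take n))
    (hlast : x (Fin.last n) = y (Fin.last n)) :
    z (Fin.last n) = x (Fin.last n) := by
  have hx_le_z := h1.sum_le
  have hz_le_y := h2.sum_le
  have hsum_x := sum_ofFn_eq_sum_take_add_last n x
  have hsum_y := sum_ofFn_eq_sum_take_add_last n y
  have hsum_z := sum_ofFn_eq_sum_take_add_last n z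
  have htake_xy := sum_eq_of_sortDesc_eq hxy
  have htake_zx := sum_eq_of_sortDesc_eq hxz
  omega
end

section
/- Let x = (a_1,...,a_n), y = (b_1,...,b_n) be rook-monoid sequences with a_k = b_k for all k ≠ i and a_i < b_i, and suppose ℓ(y) = ℓ(x) + 1. If z = (c_1,...,c_n) is a rook-monoid sequence with x ≤_D z ≤_D y and c_k = a_k for k = 1,...,i, then z = x. -/
def extF (n : ℕ) (x : Fin n → ℕ) : ℕ → ℕ := fun j => if h : j < n then x ⟨j, h⟩ else 0

lemma ofFn_eq_map (n : ℕ) (x : Fin n → ℕ) : List.ofFn x = (List.range n).map (extF n x) := by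
  apply List.ext_getElem
  · simp
  · intro j h1 h2
    simp only [List.length_ofFn] at h1
    simp [extF, h1]

lemma countP_range (p : ℕ → Bool) (K : ℕ) :
    (List.range K).countP p = ∑ j ∈ Finset.range K, if p j then 1 else 0 := by
  induction K with
  | zero => simp
  | succ K ih => rw [List.range_succ, List.countP_append, Finset.sum_range_succ, ih]; simp [List.countP_cons]

lemma countP_take_ofFn (n : ℕ) (x : Fin n → ℕ) (K : ℕ) (hK : K ≤ n) (p : ℕ → Bool) :
    ((List.ofFn x).take K).countP p = ∑ j ∈ Finset.range K, if p (extF n x j) then 1 else 0 := by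
  rw [ofFn_eq_map, ← List.map_take, List.take_range, min_eq_left hK, List.countP_map, countP_range]
  rfl

lemma countP_le_of_contLE (t : ℕ) {l m : List ℕ} (h : contLE l m) :
    l.countP (fun v => decide (t ≤ v)) ≤ m.countP (fun v => decide (t ≤ v)) := by
  rw [← (List.perm_insertionSort (· ≥ ·) l).countP_eq, ← (List.perm_insertionSort (· ≥ ·) m).countP_eq]
  have h' : List.Forall₂ (· ≤ ·) (l.insertionSort (· ≥ ·)) (m.insertionSort (· ≥ ·)) := h
  generalize l.insertionSort (· ≥ ·) = L, m.insertionSort (· ≥ ·) = M at h' ⊢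
  induction h' with
  | nil => simp
  | @cons x y l' m' hxy _ ih =>
      simp only [List.countP_cons]
      have : (if decide (t ≤ x) = true then 1 else 0) ≤ (if decide (t ≤ y) = true then 1 else 0) := by
        by_cases hx : t ≤ x
        · have : t ≤ y := le_trans hx hxy
          simp [hx, this]
        · simp [hx]
      omega
lemma coinv_cast (n : ℕ) (x : Fin n → ℕ) :
    (coinv n x : ℤ) = ∑ p : Fin n × Fin n,
      if p.1 < p.2 ∧ 0 < x p.1 ∧ x p.1 < x p.2 then (1:ℤ) else 0 := by
  rw [coinv, Finset.card_filter]
  push_cast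
  rfl

lemma dagger_lemma (n : ℕ) (a b : Fin n → ℕ) (ha : IsRook n a) (hb : IsRook n b) (i : Fin n)
    (hne : ∀ k, k ≠ i → a k = b k) (hlt : a i < b i)
    (hlen : rookLen n b = rookLen n a + 1) :
    ∀ j : Fin n, i < j → a j < a i ∨ b i < a j := by
  intro j0 hij0
  by_contra h0
  push_neg at h0
  obtain ⟨h0a, h0b⟩ := h0
  have hj0i : j0 ≠ i := Fin.ne_of_gt hij0
  have hbi0 : b i ≠ 0 := by omega
  have haj0bi : a j0 ≠ b i := by
    intro h
    have : b j0 = b i := by rw [← hne j0 hj0i, h]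
    exact hb.2 i j0 (Ne.symm hj0i) hbi0 this.symm
  -- the indicator difference function
  set d : Fin n → Fin n → ℤ := fun x y =>
    (if x < y ∧ 0 < b x ∧ b x < b y then (1:ℤ) else 0)
    - (if x < y ∧ 0 < a x ∧ a x < a y then (1:ℤ) else 0) with hd
  -- sum part
  have hsum : (∑ j : Fin n, if b j ≠ 0 then ((b j : ℤ) + n - (j.val + 1)) else 0)
      - (∑ j : Fin n, if a j ≠ 0 then ((a j : ℤ) + n - (j.val + 1)) else 0)
      = (if b i ≠ 0 then ((b i : ℤ) + n - (i.val + 1)) else 0)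
      - (if a i ≠ 0 then ((a i : ℤ) + n - (i.val + 1)) else 0) := by
    rw [← Finset.sum_sub_distrib]
    apply Finset.sum_eq_single_of_mem i (Finset.mem_univ i)
    intro j _ hj
    rw [← hne j hj]
    ring
  -- coinv part
  have hcoinv : (coinv n b : ℤ) - (coinv n a : ℤ)
      = (∑ y : Fin n, d i y) + (∑ x : Fin n, d x i) := by
    rw [coinv_cast, coinv_cast, ← Finset.sum_sub_distrib, Fintype.sum_prod_type]
    have hrow : ∀ x : Fin n, x ≠ i → ∑ y : Fin n, d x y = d x i := by
      intro x hx
      apply Finset.sum_eq_single_of_mem i (Finset.mem_univ i)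
      intro y _ hy
      simp only [hd]
      rw [← hne x hx, ← hne y hy]
      ring
    have hdii : d i i = 0 := by simp [hd]
    calc ∑ x : Fin n, ∑ y : Fin n, d x y
        = (∑ y : Fin n, d i y) + ∑ x ∈ Finset.univ.erase i, ∑ y : Fin n, d x y :=
          (Finset.add_sum_erase Finset.univ (fun x => ∑ y : Fin n, d x y) (Finset.mem_univ i)).symm
      _ = (∑ y : Fin n, d i y) + ∑ x ∈ Finset.univ.erase i, d x i := by
          congr 1
          apply Finset.sum_congr rfl
          intro x hx
          exact hrow x (Finset.ne_of_mem_erase hx)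
      _ = (∑ y : Fin n, d i y) + ∑ x : Fin n, d x i := by
          congr 1
          exact Finset.sum_erase Finset.univ hdii
  have hD : rookLen n b - rookLen n a = 1 := by rw [hlen]; ring
  rw [rookLen, rookLen] at hD
  have hmain : (if b i ≠ 0 then ((b i : ℤ) + n - (i.val + 1)) else 0)
      - (if a i ≠ 0 then ((a i : ℤ) + n - (i.val + 1)) else 0)
      - ((∑ y : Fin n, d i y) + (∑ x : Fin n, d x i)) = 1 := by
    rw [← hsum, ← hcoinv]; linarith [hD]
  clear hD hsum hcoinv hlen
  -- rewrite the two sums with b replaced by a off i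
  have hrow1 : ∀ y : Fin n, d i y =
      (if i < y ∧ 0 < b i ∧ b i < a y then (1:ℤ) else 0)
      - (if i < y ∧ 0 < a i ∧ a i < a y then (1:ℤ) else 0) := by
    intro y
    by_cases hy : y = i
    · subst hy; simp [hd]
    · simp only [hd]
      rw [show b y = a y from (hne y hy).symm]
  have hrow2 : ∀ x : Fin n, d x i =
      (if x < i ∧ 0 < a x ∧ a x < b i then (1:ℤ) else 0)
      - (if x < i ∧ 0 < a x ∧ a x < a i then (1:ℤ) else 0) := by
    intro x
    by_cases hx : x = i
    · subst hx; simp [hd]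
    · simp only [hd]
      rw [show b x = a x from (hne x hx).symm]
  by_cases hai : a i = 0
  · -- case a i = 0
    have h1 : ∑ y : Fin n, d i y
        = ∑ y : Fin n, (if i < y ∧ b i < a y then (1:ℤ) else 0) := by
      apply Finset.sum_congr rfl
      intro y _
      rw [hrow1 y]
      split_ifs <;> omega
    have h2 : ∑ x : Fin n, d x i
        = ∑ x : Fin n, (if x < i ∧ 0 < a x ∧ a x < b i then (1:ℤ) else 0) := by
      apply Finset.sum_congr rfl
      intro x _
      rw [hrow2 x]
      split_ifs <;> omega
    set P1 := Finset.univ.filter (fun y : Fin n => i < y ∧ b i < a y) with hP1def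
    set P2 := Finset.univ.filter (fun x : Fin n => x < i ∧ 0 < a x ∧ a x < b i) with hP2def
    have hc1 : ∑ y : Fin n, (if i < y ∧ b i < a y then (1:ℤ) else 0) = (P1.card : ℤ) := by
      rw [hP1def, Finset.card_filter]; push_cast; rfl
    have hc2 : ∑ x : Fin n, (if x < i ∧ 0 < a x ∧ a x < b i then (1:ℤ) else 0) = (P2.card : ℤ) := by
      rw [hP2def, Finset.card_filter]; push_cast; rfl
    -- bounds
    have hbP1 : P1.card + i.val + 2 ≤ n := by
      have hsub : insert j0 P1 ⊆ Finset.Ioi i := by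
        intro y hy
        rcases Finset.mem_insert.mp hy with h | h
        · subst h; exact Finset.mem_Ioi.mpr hij0
        · exact Finset.mem_Ioi.mpr (Finset.mem_filter.mp h).2.1
      have hj0P1 : j0 ∉ P1 := by
        intro h
        have := (Finset.mem_filter.mp h).2.2
        omega
      have := Finset.card_le_card hsub
      rw [Finset.card_insert_of_notMem hj0P1, Fin.card_Ioi] at this
      have hj0n : j0.val < n := j0.isLt
      have : i.val < j0.val := hij0
      omega
    have hbP2 : P2.card + 1 ≤ b i := by
      have hmap : ∀ x ∈ P2, a x ∈ Finset.Ioo 0 (b i) := by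
        intro x hx
        have := (Finset.mem_filter.mp hx).2
        exact Finset.mem_Ioo.mpr ⟨this.2.1, this.2.2⟩
      have hinj : Set.InjOn a P2 := by
        intro x hx y hy hxy
        by_contra hxyne
        have hx0 : a x ≠ 0 := by
          have := (Finset.mem_filter.mp hx).2.2.1; omega
        exact ha.2 x y (by exact_mod_cast hxyne) hx0 hxy
      have := Finset.card_le_card_of_injOn a hmap hinj
      rw [Nat.card_Ioo] at this
      omega
    rw [h1, h2, hc1, hc2] at hmain
    rw [if_pos hbi0, if_neg (by simpa using hai)] at hmain
    have hin : i.val + 1 ≤ n := i.isLt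
    omega
  · -- case a i > 0
    have hai' : 0 < a i := Nat.pos_of_ne_zero hai
    have h1 : ∑ y : Fin n, d i y
        = -∑ y : Fin n, (if i < y ∧ a i < a y ∧ a y ≤ b i then (1:ℤ) else 0) := by
      rw [← Finset.sum_neg_distrib]
      apply Finset.sum_congr rfl
      intro y _
      rw [hrow1 y]
      split_ifs <;> omega
    have h2 : ∑ x : Fin n, d x i
        = ∑ x : Fin n, (if x < i ∧ a i ≤ a x ∧ a x < b i then (1:ℤ) else 0) := by
      apply Finset.sum_congr rfl
      intro x _
      rw [hrow2 x]
      split_ifs <;> omega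
    set A := Finset.univ.filter (fun y : Fin n => i < y ∧ a i < a y ∧ a y ≤ b i) with hAdef
    set B := Finset.univ.filter (fun x : Fin n => x < i ∧ a i ≤ a x ∧ a x < b i) with hBdef
    have hc1 : ∑ y : Fin n, (if i < y ∧ a i < a y ∧ a y ≤ b i then (1:ℤ) else 0) = (A.card : ℤ) := by
      rw [hAdef, Finset.card_filter]; push_cast; rfl
    have hc2 : ∑ x : Fin n, (if x < i ∧ a i ≤ a x ∧ a x < b i then (1:ℤ) else 0) = (B.card : ℤ) := by
      rw [hBdef, Finset.card_filter]; push_cast; rfl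
    have hAcard : 1 ≤ A.card := by
      have hj0A : j0 ∈ A := by
        refine Finset.mem_filter.mpr ⟨Finset.mem_univ _, hij0, ?_, h0b⟩
        have haj0 : a j0 ≠ 0 := by omega
        have := ha.2 j0 i hj0i haj0
        omega
      exact Finset.card_pos.mpr ⟨j0, hj0A⟩
    have hBcard : B.card + a i + 1 ≤ b i := by
      have hmap : ∀ x ∈ B, a x ∈ Finset.Ioo (a i) (b i) := by
        intro x hx
        obtain ⟨hxi, hax1, hax2⟩ := (Finset.mem_filter.mp hx).2
        have hax0 : a x ≠ 0 := by omega
        have hxine : x ≠ i := Fin.ne_of_lt hxi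
        have := ha.2 x i hxine hax0
        exact Finset.mem_Ioo.mpr ⟨by omega, hax2⟩
      have hinj : Set.InjOn a B := by
        intro x hx y hy hxy
        by_contra hxyne
        have hx0 : a x ≠ 0 := by
          have := (Finset.mem_filter.mp hx).2.2.1; omega
        exact ha.2 x y (by exact_mod_cast hxyne) hx0 hxy
      have := Finset.card_le_card_of_injOn a hmap hinj
      rw [Nat.card_Ioo] at this
      omega
    rw [h1, h2, hc1, hc2] at hmain
    rw [if_pos hbi0, if_pos hai] at hmain
    omega

lemma count_mono (n : ℕ) (x y : Fin n → ℕ) (h : deodharLE n x y) (K : ℕ) (hK : K ≤ n) (t : ℕ) :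
    (∑ j ∈ Finset.range K, if t ≤ extF n x j then 1 else 0)
    ≤ ∑ j ∈ Finset.range K, if t ≤ extF n y j then 1 else 0 := by
  have := countP_le_of_contLE t (h K hK)
  rw [countP_take_ofFn n x K hK, countP_take_ofFn n y K hK] at this
  simpa using this

theorem sandwich_below (n : ℕ) (a b c : Fin n → ℕ) (ha : IsRook n a) (hb : IsRook n b)
    (hc : IsRook n c) (i : Fin n) (hne : ∀ k, k ≠ i → a k = b k) (hlt : a i < b i)
    (hlen : rookLen n b = rookLen n a + 1)
    (h1 : deodharLE n a c) (h2 : deodharLE n c b)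
    (hfix : ∀ k : Fin n, k ≤ i → c k = a k) :
    c = a := by
  have dagger := dagger_lemma n a b ha hb i hne hlt hlen
  have key : ∀ m : ℕ, ∀ hm : m < n, c ⟨m, hm⟩ = a ⟨m, hm⟩ := by
    intro m
    induction m using Nat.strong_induction_on with
    | _ m IH =>
      intro hm
      set k : Fin n := ⟨m, hm⟩ with hk
      by_cases hki : k ≤ i
      · exact hfix k hki
      · have hik : i < k := lt_of_not_ge hki
        have hKn : m + 1 ≤ n := hm
        -- previous entries of c equal those of a
        have hprev : ∀ j : ℕ, j < m → extF n c j = extF n a j := by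
          intro j hj
          have hjn : j < n := lt_trans hj hm
          simp only [extF, dif_pos hjn]
          exact IH j hj hjn
        have hext_k : ∀ x : Fin n → ℕ, extF n x m = x k := by
          intro x; simp [extF, hm, hk]
        have hext_i : ∀ x : Fin n → ℕ, extF n x i.val = x i := by
          intro x; simp [extF, i.isLt]
        -- key pointwise indicator inequalities
        have ineq1 : ∀ t : ℕ, (if t ≤ a k then 1 else 0) ≤ (if t ≤ c k then 1 else 0) := by
          intro t
          have h := count_mono n a c h1 (m + 1) hKn t
          rw [Finset.sum_range_succ, Finset.sum_range_succ] at h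
          have heq : (∑ j ∈ Finset.range m, if t ≤ extF n c j then 1 else 0)
              = ∑ j ∈ Finset.range m, if t ≤ extF n a j then 1 else 0 := by
            apply Finset.sum_congr rfl
            intro j hj
            rw [hprev j (Finset.mem_range.mp hj)]
          rw [heq, hext_k a, hext_k c] at h
          omega
        have ineq2 : ∀ t : ℕ, (if t ≤ c k then 1 else 0) + (if t ≤ a i then 1 else 0)
            ≤ (if t ≤ b i then 1 else 0) + (if t ≤ a k then 1 else 0) := by
          intro t
          have h := count_mono n c b h2 (m + 1) hKn t
          have himem : i.val ∈ Finset.range (m + 1) := Finset.mem_range.mpr (by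
            have : i.val < m := hik
            omega)
          have hsplit : ∀ x : Fin n → ℕ,
              (∑ j ∈ Finset.range (m+1), if t ≤ extF n x j then 1 else 0)
              = (if t ≤ x i then 1 else 0)
                + ∑ j ∈ (Finset.range (m+1)).erase i.val, if t ≤ extF n x j then 1 else 0 := by
            intro x
            rw [← hext_i x]
            exact (Finset.add_sum_erase _ (fun j => if t ≤ extF n x j then 1 else 0) himem).symm
          have herase : (∑ j ∈ (Finset.range (m+1)).erase i.val, if t ≤ extF n b j then 1 else 0)
              = ∑ j ∈ (Finset.range (m+1)).erase i.val, if t ≤ extF n a j then 1 else 0 := by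
            apply Finset.sum_congr rfl
            intro j hj
            have hji : j ≠ i.val := Finset.ne_of_mem_erase hj
            have hjn : j < n := by
              have := Finset.mem_range.mp (Finset.mem_of_mem_erase hj)
              omega
            simp only [extF, dif_pos hjn]
            rw [hne ⟨j, hjn⟩ (by simpa [Fin.ext_iff] using hji)]
          rw [hsplit b, herase] at h
          -- also expand the c side and a side
          have hcsum : (∑ j ∈ Finset.range (m+1), if t ≤ extF n c j then 1 else 0)
              = (∑ j ∈ Finset.range m, if t ≤ extF n a j then 1 else 0)
                + (if t ≤ c k then 1 else 0) := by
            rw [Finset.sum_range_succ, hext_k c]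
            congr 1
            apply Finset.sum_congr rfl
            intro j hj
            rw [hprev j (Finset.mem_range.mp hj)]
          have hasum : (∑ j ∈ Finset.range (m+1), if t ≤ extF n a j then 1 else 0)
              = (∑ j ∈ Finset.range m, if t ≤ extF n a j then 1 else 0)
                + (if t ≤ a k then 1 else 0) := by
            rw [Finset.sum_range_succ, hext_k a]
          have hasplit := hsplit a
          rw [hasum] at hasplit
          -- h : hcsum-lhs ≤ ind(b i) + E where E = erase-sum of a
          rw [hcsum] at h
          omega
        -- now conclude c k = a k
        have hak_le : a k ≤ c k := by
          have := ineq1 (a k)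
          split_ifs at this <;> omega
        show c k = a k
        rcases dagger k hik with hcase | hcase <;>
        · have h2' := ineq2 (a k + 1)
          split_ifs at h2' <;> omega
  funext k
  have := key k.val k.isLt
  simpa using this
end

section
/- Let x = (a_1,...,a_n), y = (b_1,...,b_n) be rook-monoid sequences with a_k = b_k for all k ≠ i and a_i < b_i, and suppose ℓ(y) = ℓ(x) + 1. If z = (c_1,...,c_n) is a rook-monoid sequence with x ≤_D z ≤_D y and c_k = b_k for k = 1,...,i, then z = y. -/
/-- count of entries ≥ t among the first k entries -/
def cnt {n : ℕ} (x : Fin n → ℕ) (k t : ℕ) : ℕ :=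
  ((List.ofFn x).take k).countP (fun v => decide (t ≤ v))

lemma countP_le_of_forall₂ {p : ℕ → Bool} (hp : ∀ u v : ℕ, u ≤ v → p u → p v)
    {l m : List ℕ} (h : List.Forall₂ (· ≤ ·) l m) : l.countP p ≤ m.countP p := by
  induction h with
  | nil => simp
  | @cons u v l' m' huv _ ih =>
    rw [List.countP_cons, List.countP_cons]
    have : (if p u = true then 1 else 0) ≤ (if p v = true then 1 else 0) := by
      split_ifs with h1 h2
      · exact le_refl _
      · exact absurd (hp u v huv h1) h2
      all_goals omega
    omega

lemma cnt_mono {n : ℕ} {x y : Fin n → ℕ} (h : deodharLE n x y) {k : ℕ} (hk : k ≤ n) (t : ℕ) :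
    cnt x k t ≤ cnt y k t := by
  have h2 := h k hk
  unfold contLE at h2
  have e1 := (List.perm_insertionSort (· ≥ ·) ((List.ofFn x).take k)).countP_eq
      (fun v => decide (t ≤ v))
  have e2 := (List.perm_insertionSort (· ≥ ·) ((List.ofFn y).take k)).countP_eq
      (fun v => decide (t ≤ v))
  unfold cnt
  rw [← e1, ← e2]
  exact countP_le_of_forall₂ (fun u v huv hu => by
    simp only [decide_eq_true_eq] at *; omega) h2

lemma cnt_succ {n : ℕ} (x : Fin n → ℕ) {k : ℕ} (hk : k < n) (t : ℕ) :
    cnt x (k + 1) t = cnt x k t + (if t ≤ x ⟨k, hk⟩ then 1 else 0) := by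
  unfold cnt
  rw [List.take_succ, List.countP_append, List.getElem?_ofFn]
  simp only [List.ofFnNthVal, hk, dif_pos, Option.toList_some, List.countP_singleton,
    decide_eq_true_eq]

lemma cnt_congr {n : ℕ} (x y : Fin n → ℕ) {k : ℕ} (hk : k ≤ n)
    (h : ∀ j : Fin n, j.val < k → x j = y j) (t : ℕ) : cnt x k t = cnt y k t := by
  induction k with
  | zero => simp [cnt]
  | succ m ih =>
    have hm : m < n := hk
    rw [cnt_succ x hm, cnt_succ y hm, ih (le_of_lt hm) (fun j hj => h j (Nat.lt_succ_of_lt hj)),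
      h ⟨m, hm⟩ (Nat.lt_succ_self m)]

lemma cnt_swap {n : ℕ} (x y : Fin n → ℕ) (i : Fin n) (h : ∀ j, j ≠ i → x j = y j)
    {k : ℕ} (hik : i.val < k) (hk : k ≤ n) (t : ℕ) :
    cnt x k t + (if t ≤ y i then 1 else 0) = cnt y k t + (if t ≤ x i then 1 else 0) := by
  induction k, hik using Nat.le_induction with
  | base =>
    have hi : i.val < n := i.isLt
    rw [cnt_succ x hi, cnt_succ y hi,
      cnt_congr x y (le_of_lt hi) (fun j hj => h j (by intro e; rw [e] at hj; omega))]
    have : (⟨i.val, hi⟩ : Fin n) = i := by ext; rfl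
    rw [this]; omega
  | succ m hm ih =>
    have hmn : m < n := hk
    have hne : (⟨m, hmn⟩ : Fin n) ≠ i := by intro e; have := congrArg Fin.val e; simp at this; omega
    rw [cnt_succ x hmn, cnt_succ y hmn, h _ hne]
    have := ih (le_of_lt hmn)
    omega

open Finset in
lemma len_contra {n : ℕ} (a b : Fin n → ℕ) (ha : IsRook n a) (hb : IsRook n b) (i k : Fin n)
    (hne : ∀ j, j ≠ i → a j = b j) (hlt : a i < b i) (hik : i < k)
    (hak : a i < a k) (hkb : a k < b i) :
    2 ≤ rookLen n b - rookLen n a := by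
  classical
  set χ : (Fin n → ℕ) → Fin n × Fin n → ℤ :=
    fun x p => if p.1 < p.2 ∧ 0 < x p.1 ∧ x p.1 < x p.2 then 1 else 0 with hχ
  set d : Fin n × Fin n → ℤ := fun p => χ b p - χ a p with hd
  set E : ℤ := if a i = 0 then (n : ℤ) - 1 - i.val else 0 with hE
  set F : ℤ := (if b i ≠ 0 then ((b i : ℤ) + n - (i.val + 1)) else 0) -
      (if a i ≠ 0 then ((a i : ℤ) + n - (i.val + 1)) else 0) with hF
  have hbi0 : b i ≠ 0 := by omega
  -- sum part
  have hsum : (∑ j : Fin n, if b j ≠ 0 then ((b j : ℤ) + n - (j.val + 1)) else 0) -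
      (∑ j : Fin n, if a j ≠ 0 then ((a j : ℤ) + n - (j.val + 1)) else 0) = F := by
    rw [← Finset.sum_sub_distrib]
    refine Finset.sum_eq_single i (fun j _ hj => by rw [hne j hj]; ring) (by simp)
  -- coinv as ℤ-sum
  have hcoinv : ∀ x : Fin n → ℕ, ((coinv n x : ℤ)) = ∑ p : Fin n × Fin n, χ x p := by
    intro x
    unfold coinv
    rw [Finset.card_filter]
    push_cast [hχ]
    exact Finset.sum_congr rfl (fun p _ => by split_ifs <;> simp
    )
  have hdiff : ((coinv n b : ℤ)) - coinv n a =
      (∑ y ∈ univ.erase i, d (i, y)) + (∑ x ∈ univ.erase i, d (x, i)) := by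
    rw [hcoinv, hcoinv, ← Finset.sum_sub_distrib]
    have : (∑ p : Fin n × Fin n, d p) = ∑ x : Fin n, ∑ y : Fin n, d (x, y) :=
      Fintype.sum_prod_type d
    rw [this]
    have hrow : ∀ x : Fin n, x ≠ i → (∑ y : Fin n, d (x, y)) = d (x, i) := by
      intro x hx
      refine Finset.sum_eq_single i (fun y _ hy => ?_) (by simp)
      simp only [hd, hχ]
      rw [← hne x hx, ← hne y hy]
      ring
    rw [← Finset.add_sum_erase _ _ (Finset.mem_univ i)]
    rw [Finset.sum_congr rfl (fun x hx => hrow x (Finset.ne_of_mem_erase hx))]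
    congr 1
    -- ∑ y, d (i, y) = ∑ y in erase i, d (i,y)
    rw [← Finset.add_sum_erase _ _ (Finset.mem_univ i)]
    have : d (i, i) = 0 := by simp [hd, hχ]
    rw [this, zero_add]
  -- F value
  have hFval : F = (b i : ℤ) - a i + E := by
    rw [hF, hE]
    by_cases h0 : a i = 0 <;> simp [h0, hbi0] <;> push_cast <;> ring
  -- bound B2
  have hB2 : (∑ y ∈ univ.erase i, d (i, y)) ≤ E := by
    have hpt : ∀ y ∈ univ.erase i, d (i, y) ≤
        (if a i = 0 then (if i.val < y.val then (1:ℤ) else 0) else 0) := by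
      intro y hy
      have hyi : y ≠ i := Finset.ne_of_mem_erase hy
      simp only [hd, hχ, Fin.lt_def]
      rw [← hne y hyi]
      split_ifs <;> omega
    calc (∑ y ∈ univ.erase i, d (i, y)) ≤
        ∑ y ∈ univ.erase i, (if a i = 0 then (if i.val < y.val then (1:ℤ) else 0) else 0) :=
          Finset.sum_le_sum hpt
      _ ≤ E := by
          rw [hE]
          by_cases h0 : a i = 0
          · simp only [h0, if_true]
            have e1 : (∑ y ∈ univ.erase i, (if i.val < y.val then (1:ℤ) else 0)) =
                (((univ.erase i).filter (fun y : Fin n => i.val < y.val)).card : ℤ) := by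
              rw [Finset.card_filter]
              push_cast
              rfl
            have e2 : ((univ.erase i).filter (fun y : Fin n => i.val < y.val)) = Finset.Ioi i := by
              ext y
              simp only [Finset.mem_filter, Finset.mem_erase, Finset.mem_univ, Finset.mem_Ioi,
                true_and, and_true, Fin.lt_def]
              constructor
              · rintro ⟨-, h2⟩; exact h2
              · intro h2; exact ⟨by intro e; rw [e] at h2; omega, h2⟩
            rw [e1, e2, Fin.card_Ioi]
            have := i.isLt
            omega
          · simp [h0]
    -- bound B1
  have hB1 : (∑ x ∈ univ.erase i, d (x, i)) ≤ (b i : ℤ) - a i - 2 := by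
    set T : Finset (Fin n) := (univ.erase i).filter
      (fun x => x.val < i.val ∧ 0 < a x ∧ a i < a x ∧ a x < b i) with hT
    have hpt : ∀ x ∈ univ.erase i, d (x, i) ≤
        (if x.val < i.val ∧ 0 < a x ∧ a i < a x ∧ a x < b i then (1:ℤ) else 0) := by
      intro x hx
      have hxi : x ≠ i := Finset.ne_of_mem_erase hx
      have hdis : a x ≠ 0 → a x ≠ a i := fun h0 => ha.2 x i hxi h0
      simp only [hd, hχ, Fin.lt_def]
      rw [← hne x hxi]
      split_ifs <;> omega
    have hsumT : (∑ x ∈ univ.erase i,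
        (if x.val < i.val ∧ 0 < a x ∧ a i < a x ∧ a x < b i then (1:ℤ) else 0)) = (T.card : ℤ) := by
      rw [hT, Finset.card_filter]
      push_cast
      rfl
    have hcard : T.card + 1 ≤ (Finset.Ioo (a i) (b i)).card := by
      have hinj : Set.InjOn a T := by
        intro x hx y hy hxy
        by_contra hne'
        have hx' := Finset.mem_filter.mp hx
        exact ha.2 x y hne' (by omega) hxy
      have himg : T.image a ⊆ Finset.Ioo (a i) (b i) \ {a k} := by
        intro v hv
        obtain ⟨x, hx, rfl⟩ := Finset.mem_image.mp hv
        have hx' := (Finset.mem_filter.mp hx).2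
        have hxk : x ≠ k := by
          intro e
          have h1 : i.val < k.val := hik
          rw [e] at hx'
          omega
        have : a x ≠ a k := ha.2 x k hxk (by omega)
        simp only [Finset.mem_sdiff, Finset.mem_Ioo, Finset.mem_singleton]
        exact ⟨⟨hx'.2.2.1, hx'.2.2.2⟩, this⟩
      have hk : a k ∈ Finset.Ioo (a i) (b i) := Finset.mem_Ioo.mpr ⟨hak, hkb⟩
      have := Finset.card_le_card himg
      rw [Finset.card_image_of_injOn hinj] at this
      rw [Finset.card_sdiff_of_subset (Finset.singleton_subset_iff.mpr hk)] at this
      have hpos : 1 ≤ (Finset.Ioo (a i) (b i)).card := Finset.card_pos.mpr ⟨a k, hk⟩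
      simp only [Finset.card_singleton] at this
      omega
    rw [Nat.card_Ioo] at hcard
    calc (∑ x ∈ univ.erase i, d (x, i)) ≤ _ := Finset.sum_le_sum hpt
      _ = (T.card : ℤ) := hsumT
      _ ≤ (b i : ℤ) - a i - 2 := by omega
  -- combine
  have : rookLen n b - rookLen n a =
      F - ((∑ y ∈ univ.erase i, d (i, y)) + (∑ x ∈ univ.erase i, d (x, i))) := by
    unfold rookLen
    rw [← hdiff, ← hsum]
    ring
  rw [this, hFval]
  omega

theorem sandwich_above (n : ℕ) (a b c : Fin n → ℕ) (ha : IsRook n a) (hb : IsRook n b)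
    (hc : IsRook n c) (i : Fin n) (hne : ∀ k, k ≠ i → a k = b k) (hlt : a i < b i)
    (hlen : rookLen n b = rookLen n a + 1)
    (h1 : deodharLE n a c) (h2 : deodharLE n c b)
    (hfix : ∀ k : Fin n, k ≤ i → c k = b k) :
    c = b := by
  classical
  by_contra hcb
  have hex : ∃ m : ℕ, ∃ h : m < n, c ⟨m, h⟩ ≠ b ⟨m, h⟩ := by
    by_contra hno
    push_neg at hno
    exact hcb (funext fun j => hno j.val j.isLt)
  obtain ⟨hK, hKne⟩ := Nat.find_spec hex
  set K : ℕ := Nat.find hex with hKdef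
  set k : Fin n := ⟨K, hK⟩ with hkdef
  have hmin : ∀ j : Fin n, j.val < K → c j = b j := by
    intro j hj
    by_contra hj'
    exact absurd (Nat.find_min hex hj) (by push_neg; exact ⟨j.isLt, by simpa using hj'⟩)
  have hik : i < k := by
    rcases lt_or_ge i k with h | h
    · exact h
    · exact absurd (hfix k h) hKne
  have hikv : i.val < K := hik
  have hKn : K ≤ n := le_of_lt hK
  have hK1n : K + 1 ≤ n := hK
  -- c k ≤ b k
  have hck : c k < b k := by
    have h := cnt_mono h2 hK1n (c k)
    rw [cnt_succ c hK, cnt_succ b hK, cnt_congr c b hKn hmin] at h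
    have : (⟨K, hK⟩ : Fin n) = k := rfl
    rw [this] at h
    rcases Nat.lt_or_ge (c k) (b k) with h' | h'
    · exact h'
    · exfalso
      rcases Nat.lt_or_ge (b k) (c k) with h'' | h''
      · simp only [le_refl, if_true, if_neg (by omega : ¬ c k ≤ b k)] at h
        omega
      · exact hKne (le_antisymm (by omega) (by omega))
  -- key inequality from h1 at t = b k
  have hkne : k ≠ i := fun e => by rw [e] at hik; exact lt_irrefl i hik
  have habk : a k = b k := hne k hkne
  have hkey := cnt_mono h1 hK1n (b k)
  rw [cnt_succ a hK, cnt_succ c hK, cnt_congr c b hKn hmin] at hkey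
  have hfk : (⟨K, hK⟩ : Fin n) = k := rfl
  rw [hfk] at hkey
  have hswap := cnt_swap a b i (fun j hj => hne j hj) hikv hKn (b k)
  rw [habk, if_pos (le_refl (b k)), if_neg (by omega : ¬ b k ≤ c k)] at hkey
  -- derive a i < b k ≤ b i
  have hbnds : a i < b k ∧ b k ≤ b i := by
    by_cases h3 : b k ≤ a i <;> by_cases h4 : b k ≤ b i <;>
      simp only [h3, h4, if_true, if_false, if_pos, if_neg, not_false_iff] at hswap <;> omega
  have hbk0 : b k ≠ 0 := by omega
  have hbki : b k ≠ b i := hb.2 k i hkne hbk0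
  exact absurd hlen (by have := len_contra a b ha hb i k hne hlt hik (by omega) (by omega); omega)
end

section
/- Let x = (a_1,...,a_n) and y = (b_1,...,b_n) be rook-monoid sequences with a_k = b_k for all k ≠ i and a_i < b_i. Then ℓ(y) = ℓ(x) + 1 if and only if y covers x in the Deodhar order (i.e., x <_D y and there is no z with x <_D z <_D y). -/
/-- y covers x in the Deodhar order on rook-monoid sequences. -/
def deodharCovers (n : ℕ) (x y : Fin n → ℕ) : Prop :=
  deodharLE n x y ∧ x ≠ y ∧
    ¬∃ z : Fin n → ℕ, IsRook n z ∧
      deodharLE n x z ∧ x ≠ z ∧ deodharLE n z y ∧ z ≠ y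

/-!
Write `u = a i < v = b i`. Both sides of the equivalence turn out to say that every value strictly
between `u` and `v` already occurs in `a`, and that no later entry `a j` (`i < j`) lies in `[u, v)`.

Only the summand at `i` and the pairs containing `i` change the length, and counting them gives
`ℓ(b) - ℓ(a) = 1 + #(values in (u, v) missing from a) + 2 #{j > i | u < a j < v}`
`+ #{j > i | a j = u}`.

The Deodhar order compares the counts `#{j < k | c ≤ x j}` for all `k` and `c`. Those of `a` and
`b` differ only for `i < k` and `u < c ≤ v`, so a `z` with `a ≤ z ≤ b` has the counts of `a`
everywhere else. Together with the condition on later entries this forces `z = a` off `i` and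
`u ≤ z i ≤ v`, and a value of `z i` strictly between would repeat a value of `a` elsewhere.
Conversely, when the condition fails there is an intermediate rook sequence: put a missing value
at `i`; or, given a later `a j ∈ (u, v)`, put `v` at `i` and `u` at `j`; or, when `u = 0` and a
later `a j = 0`, put `v` at `j` instead of `i`.
-/

open Finset Function

theorem List.countP_eq_sum_map {α : Type*} (p : α → Bool) (l : List α) :
    l.countP p = (l.map fun v => if p v then 1 else 0).sum := by
  induction l with
  | nil => rfl
  | cons v l ih => by_cases h : p v <;> simp [ih, h, add_comm]

theorem List.Forall₂.countP_le_countP {α β : Type*} {R : α → β → Prop} {p : α → Bool}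
    {q : β → Bool} {s : List α} {t : List β} (h : List.Forall₂ R s t)
    (hpq : ∀ x y, R x y → p x → q y) : s.countP p ≤ t.countP q := by
  induction h with
  | nil => simp
  | @cons x y _ _ hxy _ ih =>
    rw [List.countP_cons, List.countP_cons]
    split_ifs with hx hy hy
    · omega
    · exact absurd (hpq x y hxy hx) hy
    all_goals omega

theorem List.forall₂_le_of_countP_le {α : Type*} [LinearOrder α] :
    ∀ {s t : List α}, s.Pairwise (· ≥ ·) → t.Pairwise (· ≥ ·) → s.length = t.length →
      (∀ c, s.countP (c ≤ ·) ≤ t.countP (c ≤ ·)) → List.Forall₂ (· ≤ ·) s t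
  | [], [], _, _, _, _ => .nil
  | [], _ :: _, _, _, hlen, _ | _ :: _, [], _, _, hlen, _ => by simp at hlen
  | x :: s, y :: t, hs, ht, hlen, hcount => by
    rw [List.pairwise_cons] at hs ht
    have hxy : x ≤ y := by
      by_contra! hyx
      have ht0 : t.countP (x ≤ ·) = 0 :=
        List.countP_eq_zero.mpr fun e he => by simpa using (ht.1 e he).trans_lt hyx
      simpa [List.countP_cons, hyx.not_ge, ht0] using hcount x
    refine .cons hxy (List.forall₂_le_of_countP_le hs.2 ht.2 (by simpa using hlen) fun c => ?_)
    by_cases hcx : c ≤ x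
    · simpa [List.countP_cons, hcx, hcx.trans hxy] using hcount c
    · have hs0 : s.countP (c ≤ ·) = 0 :=
        List.countP_eq_zero.mpr fun e he => by simpa using (hs.1 e he).trans_lt (not_le.mp hcx)
      omega

theorem List.forall₂_le_iff_countP_le {α : Type*} [LinearOrder α] {s t : List α}
    (hs : s.Pairwise (· ≥ ·)) (ht : t.Pairwise (· ≥ ·)) :
    List.Forall₂ (· ≤ ·) s t ↔
      s.length = t.length ∧ ∀ c, s.countP (c ≤ ·) ≤ t.countP (c ≤ ·) :=
  ⟨fun h => ⟨h.length_eq, fun _ => h.countP_le_countP fun _ _ hxy hx =>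
      decide_eq_true ((of_decide_eq_true hx).trans hxy)⟩,
    fun h => List.forall₂_le_of_countP_le hs ht h.1 h.2⟩

theorem contLE_iff_countP_le {l m : List ℕ} :
    contLE l m ↔ l.length = m.length ∧ ∀ c, l.countP (c ≤ ·) ≤ m.countP (c ≤ ·) := by
  have pl := List.perm_insertionSort (· ≥ ·) l
  have pm := List.perm_insertionSort (· ≥ ·) m
  rw [contLE, sortDesc, sortDesc, List.forall₂_le_iff_countP_le (List.pairwise_insertionSort _ l)
    (List.pairwise_insertionSort _ m)]
  simp only [pl.length_eq, pm.length_eq, pl.countP_eq, pm.countP_eq]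

def prefixCount {n : ℕ} (x : Fin n → ℕ) (k c : ℕ) : ℕ := #{j : Fin n | j.val < k ∧ c ≤ x j}

theorem countP_take_ofFn_s11 {n : ℕ} (x : Fin n → ℕ) (k c : ℕ) :
    ((List.ofFn x).take k).countP (c ≤ ·) = prefixCount x k c := by
  rw [List.countP_eq_sum_map, List.map_take, List.map_ofFn, List.sum_take_ofFn, prefixCount,
    card_filter, sum_filter]
  simp [ite_and]

theorem deodharLE_iff_prefixCount_le {n : ℕ} {x y : Fin n → ℕ} :
    deodharLE n x y ↔ ∀ k c, prefixCount x k c ≤ prefixCount y k c := by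
  have key : ∀ k, contLE ((List.ofFn x).take k) ((List.ofFn y).take k) ↔
      ∀ c, prefixCount x k c ≤ prefixCount y k c := by
    simp [contLE_iff_countP_le, countP_take_ofFn_s11]
  refine ⟨fun h k => ?_, fun h k _ => (key k).2 (h k)⟩
  rcases le_total k n with hk | hk
  · exact (key k).1 (h k hk)
  · rw [← key, List.take_of_length_le (by simpa), List.take_of_length_le (by simpa)]
    have := h n le_rfl
    rwa [List.take_of_length_le (by simp), List.take_of_length_le (by simp)] at this

section DeodharOrder

variable {n : ℕ}

theorem prefixCount_succ (x : Fin n → ℕ) (j : Fin n) (c : ℕ) :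
    prefixCount x (j + 1) c = prefixCount x j c + if c ≤ x j then 1 else 0 := by
  simp only [prefixCount, card_filter, Fintype.sum_eq_add_sum_compl j, lt_add_one, true_and,
    lt_irrefl, false_and, if_false, zero_add]
  rw [add_comm]
  congr 1
  refine sum_congr rfl fun l hl => ?_
  have : l.val ≠ j.val := Fin.val_ne_of_ne (by simpa using hl)
  simp only [show l.val < j + 1 ↔ l.val < j by omega]

theorem prefixCount_update (x : Fin n → ℕ) (p : Fin n) (w k c : ℕ) :
    prefixCount (update x p w) k c + (if p.val < k ∧ c ≤ x p then 1 else 0) =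
      prefixCount x k c + if p.val < k ∧ c ≤ w then 1 else 0 := by
  simp only [prefixCount, card_filter, Fintype.sum_eq_add_sum_compl p, update_self]
  rw [sum_congr rfl fun l hl => by rw [update_of_ne (by simpa using hl)]]
  ring

theorem eq_update_of_eq_off {x y : Fin n → ℕ} {p : Fin n} (hne : ∀ k, k ≠ p → x k = y k) :
    y = update x p (y p) :=
  Function.eq_update_iff.mpr ⟨rfl, fun k hk => (hne k hk).symm⟩

theorem deodharLE_of_eq_off {x y : Fin n → ℕ} {p : Fin n} (hne : ∀ k, k ≠ p → x k = y k)
    (h : x p ≤ y p) : deodharLE n x y := by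
  rw [deodharLE_iff_prefixCount_le, eq_update_of_eq_off hne]
  intro k c
  have := prefixCount_update x p (y p) k c
  have : c ≤ x p → c ≤ y p := fun hc => hc.trans h
  split_ifs at * <;> omega

theorem deodharLE_trans {x y z : Fin n → ℕ} (hxy : deodharLE n x y) (hyz : deodharLE n y z) :
    deodharLE n x z := by
  rw [deodharLE_iff_prefixCount_le] at *
  exact fun k c => (hxy k c).trans (hyz k c)

theorem deodharLE_comp_swap_s11 {x : Fin n → ℕ} {p q : Fin n} (hpq : p < q) (h : x p ≤ x q) :
    deodharLE n x (x ∘ Equiv.swap p q) := by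
  rw [deodharLE_iff_prefixCount_le, Equiv.comp_swap_eq_update]
  intro k c
  have h₁ := prefixCount_update x q (x p) k c
  have h₂ := prefixCount_update (update x q (x p)) p (x q) k c
  rw [update_of_ne hpq.ne] at h₂
  have : c ≤ x p → c ≤ x q := fun hc => hc.trans h
  have : p.val < q.val := hpq
  split_ifs at * <;> omega

end DeodharOrder

theorem IsRook.update {n : ℕ} {x : Fin n → ℕ} (hx : IsRook n x) {p : Fin n} {w : ℕ}
    (hw : w ≤ n) (hfresh : w ≠ 0 → ∀ k, k ≠ p → x k ≠ w) : IsRook n (update x p w) := by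
  refine ⟨fun k => ?_, fun k l hkl hk => ?_⟩
  · rcases eq_or_ne k p with rfl | hk
    · simpa using hw
    · simpa [hk] using hx.1 k
  · rcases eq_or_ne k p with rfl | hkp
    · simp only [update_self] at hk ⊢
      simpa [hkl.symm] using (hfresh hk l hkl.symm).symm
    · rcases eq_or_ne l p with rfl | hlp
      · simp only [update_self, update_of_ne hkp] at hk ⊢
        rcases eq_or_ne w 0 with rfl | hw0
        · exact hk
        · exact hfresh hw0 k hkp
      · simpa [hkp, hlp] using hx.2 k l hkl (by simpa [hkp] using hk)

theorem IsRook.injOn {n : ℕ} {a : Fin n → ℕ} (ha : IsRook n a) : Set.InjOn a {j | a j ≠ 0} :=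
  fun j hj k _ hjk => by_contra fun h => ha.2 j k h hj hjk

theorem Fintype.sum_prod_eq_of_eq_zero_off {ι M : Type*} [Fintype ι] [DecidableEq ι]
    [AddCommGroup M] (f : ι × ι → M) (i : ι) (h : ∀ p q, p ≠ i → q ≠ i → f (p, q) = 0) :
    ∑ pq, f pq = ∑ q, f (i, q) + ∑ p, f (p, i) - f (i, i) := by
  have hrow : ∀ p ∈ ({i}ᶜ : Finset ι), ∑ q, f (p, q) = f (p, i) := fun p hp =>
    Fintype.sum_eq_single i fun q hq => h p q (by simpa using hp) hq
  rw [Fintype.sum_prod_type, Fintype.sum_eq_add_sum_compl i (fun p => ∑ q, f (p, q)),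
    Finset.sum_congr rfl hrow, Fintype.sum_eq_add_sum_compl i (fun p => f (p, i))]
  abel

theorem card_Ioo_eq_card_missing_add_card_preimage {ι : Type*} [Fintype ι] {a : ι → ℕ}
    (ha : Set.InjOn a {j | a j ≠ 0}) (u v : ℕ) :
    v - u - 1 = #{w ∈ Ioo u v | ∀ j, a j ≠ w} + #{j | u < a j ∧ a j < v} := by
  rw [← Nat.card_Ioo, ← card_filter_add_card_filter_not (p := fun w => ∀ j, a j ≠ w)]
  congr 1
  have himage : {w ∈ Ioo u v | ¬∀ j, a j ≠ w} = image a {j | u < a j ∧ a j < v} := by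
    ext w
    simp only [mem_filter, mem_Ioo, mem_image, mem_univ, true_and, not_forall, not_not]
    constructor
    · rintro ⟨hw, j, rfl⟩
      exact ⟨j, hw, rfl⟩
    · rintro ⟨j, hj, rfl⟩
      exact ⟨hj, j, rfl⟩
  rw [himage, card_image_of_injOn]
  refine ha.mono fun j hj => ?_
  simp only [coe_filter, mem_univ, true_and, Set.mem_ofPred_eq, ne_eq] at hj ⊢
  omega

def IsCoveringRaise {n : ℕ} (a : Fin n → ℕ) (i : Fin n) (v : ℕ) : Prop :=
  Set.Ioo (a i) v ⊆ Set.range a ∧ ∀ j, i < j → a j ∉ Set.Ico (a i) v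

section raise

variable {n : ℕ} {a b z : Fin n → ℕ} {i : Fin n}

theorem apply_ne_of_raise (hb : IsRook n b) (hne : ∀ k, k ≠ i → a k = b k) (hlt : a i < b i)
    {k : Fin n} (hk : k ≠ i) : a k ≠ b i := by
  rw [hne k hk]
  intro h
  exact hb.2 k i hk (by omega) h

theorem prefixCount_eq_of_deodharLE_of_deodharLE (hne : ∀ k, k ≠ i → a k = b k)
    (haz : deodharLE n a z) (hzb : deodharLE n z b) {k c : ℕ}
    (hkc : ¬(i.val < k ∧ a i < c ∧ c ≤ b i)) : prefixCount z k c = prefixCount a k c := by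
  rw [deodharLE_iff_prefixCount_le] at haz hzb
  have := prefixCount_update a i (b i) k c
  rw [← eq_update_of_eq_off hne] at this
  have := haz k c
  have := hzb k c
  split_ifs at * <;> omega

theorem le_apply_iff_of_prefixCount_eq {x y : Fin n → ℕ} {j : Fin n} {c : ℕ}
    (h₀ : prefixCount x j c = prefixCount y j c)
    (h₁ : prefixCount x (j + 1) c = prefixCount y (j + 1) c) : c ≤ x j ↔ c ≤ y j := by
  rw [prefixCount_succ, prefixCount_succ, h₀] at h₁
  split_ifs at h₁ <;> constructor <;> intro <;> omega

theorem eq_or_eq_of_deodharLE_of_deodharLE (hb : IsRook n b)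
    (hne : ∀ k, k ≠ i → a k = b k) (hlt : a i < b i) (hcov : IsCoveringRaise a i (b i))
    (hz : IsRook n z) (haz : deodharLE n a z) (hzb : deodharLE n z b) : z = a ∨ z = b := by
  have hentry : ∀ j c, (j < i ∨ ¬(a i < c ∧ c ≤ b i)) → (c ≤ z j ↔ c ≤ a j) := by
    intro j c h
    have : j.val < i.val ∨ ¬(a i < c ∧ c ≤ b i) := h
    exact le_apply_iff_of_prefixCount_eq
      (prefixCount_eq_of_deodharLE_of_deodharLE hne haz hzb (by omega))
      (prefixCount_eq_of_deodharLE_of_deodharLE hne haz hzb (by omega))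
  have hoff : ∀ j, j ≠ i → z j = a j := by
    intro j hj
    have hv := apply_ne_of_raise hb hne hlt hj
    have hthr : ∀ c, c = a j ∨ c = a j + 1 → (j < i ∨ ¬(a i < c ∧ c ≤ b i)) := by
      rintro c hc
      rcases lt_or_gt_of_ne hj with hji | hij
      · exact .inl hji
      · have := hcov.2 j hij
        simp only [Set.mem_Ico, not_and, not_lt] at this
        omega
    have h₁ := hentry j (a j) (hthr _ (.inl rfl))
    have h₂ := hentry j (a j + 1) (hthr _ (.inr rfl))
    simp only [le_refl, iff_true, add_le_iff_nonpos_right, nonpos_iff_eq_zero, one_ne_zero,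
      iff_false, not_le] at h₁ h₂
    omega
  have hlow : a i ≤ z i := by
    rcases Nat.eq_zero_or_pos (a i) with h0 | h0
    · omega
    · exact (hentry i (a i) (.inr (by omega))).2 le_rfl
  have hhigh : z i ≤ b i := by
    have := hentry i (b i + 1) (.inr (by omega))
    omega
  have hzi : z i = a i ∨ z i = b i := by
    by_contra! h
    obtain ⟨j, hj⟩ := hcov.1 (show z i ∈ Set.Ioo (a i) (b i) from ⟨by omega, by omega⟩)
    have hji : j ≠ i := by rintro rfl; omega
    exact hz.2 i j hji.symm (by omega) (by rw [hoff j hji, hj])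
  rcases hzi with h | h
  · exact .inl (funext fun k => by rcases eq_or_ne k i with rfl | hk <;> simp [*])
  · exact .inr (funext fun k => by rcases eq_or_ne k i with rfl | hk <;> simp [*])

end raise

section witnesses

variable {n : ℕ} {a b : Fin n → ℕ} {i : Fin n}

theorem not_deodharCovers_of_missing (ha : IsRook n a) (hb : IsRook n b)
    (hne : ∀ k, k ≠ i → a k = b k) {w : ℕ} (hw : a i < w) (hwb : w < b i)
    (hmiss : ∀ j, a j ≠ w) : ¬deodharCovers n a b := by
  have hoff : ∀ k, k ≠ i → update a i w k = b k := fun k hk => by simp [hk, hne k hk]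
  refine fun hcov => hcov.2.2 ⟨update a i w,
    ha.update (by linarith [hb.1 i]) fun _ k _ => hmiss k,
    deodharLE_of_eq_off (p := i) (fun k hk => by simp [hk]) (by simpa using hw.le),
    fun h => hw.ne (by simpa using congrFun h i),
    deodharLE_of_eq_off hoff (by simpa using hwb.le),
    fun h => hwb.ne (by simpa using congrFun h i)⟩

theorem not_deodharCovers_of_later_between (ha : IsRook n a) (hb : IsRook n b)
    (hne : ∀ k, k ≠ i → a k = b k) (hlt : a i < b i) {j : Fin n} (hij : i < j)
    (hlow : a i < a j) (hhigh : a j < b i) : ¬deodharCovers n a b := by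
  have hbj : b j = a j := (hne j hij.ne').symm
  have hrook : IsRook n (update b j (a i)) := hb.update (ha.1 i) fun hu k _ => by
    rcases eq_or_ne k i with rfl | hki
    · exact hlt.ne'
    · rw [← hne k hki]
      exact fun h => ha.2 k i hki (by omega) h
  have hswap : ∀ k, k ≠ i → (a ∘ Equiv.swap i j) k = update b j (a i) k := by
    intro k hki
    rcases eq_or_ne k j with rfl | hkj
    · simp
    · simp [hkj, Equiv.swap_apply_of_ne_of_ne hki hkj, hne k hki]
  refine fun hcov => hcov.2.2 ⟨update b j (a i), hrook,
    deodharLE_trans (deodharLE_comp_swap_s11 hij hlow.le)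
      (deodharLE_of_eq_off hswap (by simpa [hij.ne] using hhigh.le)),
    fun h => hlow.ne' (by simpa using congrFun h j),
    deodharLE_of_eq_off (p := j) (fun k hk => by simp [hk]) (by simpa [hbj] using hlow.le),
    fun h => hlow.ne (by simpa [hbj] using congrFun h j)⟩

theorem not_deodharCovers_of_later_zero (ha : IsRook n a) (hb : IsRook n b)
    (hne : ∀ k, k ≠ i → a k = b k) (hlt : a i < b i) (hi : a i = 0) {j : Fin n} (hij : i < j)
    (hj : a j = 0) : ¬deodharCovers n a b := by
  have hswap : update a j (b i) ∘ Equiv.swap i j = b := by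
    ext k
    rcases eq_or_ne k i with rfl | hki
    · simp
    rcases eq_or_ne k j with rfl | hkj
    · simp [hij.ne, hi, ← hne k hki, hj]
    · simp [hkj, Equiv.swap_apply_of_ne_of_ne hki hkj, hne k hki]
  have hzb := deodharLE_comp_swap_s11 (x := update a j (b i)) hij (by simp [hij.ne, hi])
  rw [hswap] at hzb
  refine fun hcov => hcov.2.2 ⟨update a j (b i), ha.update (hb.1 i) fun _ k _ => ?_,
    deodharLE_of_eq_off (p := j) (fun k hk => by simp [hk]) (by simp [hj]),
    fun h => absurd (congrFun h j) (by simp only [hj, update_self]; omega), hzb,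
    fun h => hlt.ne (by simpa [hij.ne] using congrFun h i)⟩
  · rcases eq_or_ne k i with rfl | hki
    · omega
    · exact apply_ne_of_raise hb hne hlt hki

end witnesses

section length

variable {n : ℕ} {a b : Fin n → ℕ} {i : Fin n}

theorem coinv_sub_coinv_of_eq_off (hne : ∀ k, k ≠ i → a k = b k) :
    (coinv n b : ℤ) - coinv n a = ∑ j,
      ((if j < i ∧ 0 < a j ∧ a j < b i then 1 else 0) -
        (if j < i ∧ 0 < a j ∧ a j < a i then 1 else 0) +
      ((if i < j ∧ 0 < b i ∧ b i < a j then 1 else 0) -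
        (if i < j ∧ 0 < a i ∧ a i < a j then 1 else 0))) := by
  simp only [coinv, natCast_card_filter, ← sum_sub_distrib]
  rw [Fintype.sum_prod_eq_of_eq_zero_off _ i fun p q hp hq => by simp [← hne p hp, ← hne q hq],
    ← sum_add_distrib]
  simp only [lt_irrefl, false_and, if_false, sub_self, sub_zero]
  refine sum_congr rfl fun j _ => ?_
  rcases eq_or_ne j i with rfl | hj
  · simp
  · rw [← hne j hj]
    ring

theorem rookLen_sub_rookLen_of_eq_off (hne : ∀ k, k ≠ i → a k = b k) (hbi : b i ≠ 0) :
    rookLen n b - rookLen n a =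
      ((b i : ℤ) + n - (i.val + 1)) - (if a i ≠ 0 then (a i : ℤ) + n - (i.val + 1) else 0) -
        ((coinv n b : ℤ) - coinv n a) := by
  have hsum : (∑ j : Fin n, if b j ≠ 0 then ((b j : ℤ) + n - (j.val + 1)) else 0) -
      (∑ j : Fin n, if a j ≠ 0 then ((a j : ℤ) + n - (j.val + 1)) else 0) =
      ((b i : ℤ) + n - (i.val + 1)) - if a i ≠ 0 then ((a i : ℤ) + n - (i.val + 1)) else 0 := by
    rw [← sum_sub_distrib, Fintype.sum_eq_single i fun j hj => by rw [hne j hj, sub_self],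
      if_pos hbi]
  rw [rookLen, rookLen, ← hsum]
  ring

theorem coinv_sub_coinv_of_raise (ha : IsRook n a) (hb : IsRook n b)
    (hne : ∀ k, k ≠ i → a k = b k) (hlt : a i < b i) :
    (coinv n b : ℤ) - coinv n a = #{j | a i < a j ∧ a j < b i} +
      ((if a i = 0 then #{j | i < j} else 0 : ℕ) : ℤ) -
      2 * #{j | i < j ∧ a i < a j ∧ a j < b i} - #{j | i < j ∧ a j = a i} := by
  have hpoint : ∀ j : Fin n,
      ((if j < i ∧ 0 < a j ∧ a j < b i then 1 else 0) -
        (if j < i ∧ 0 < a j ∧ a j < a i then 1 else 0) +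
      ((if i < j ∧ 0 < b i ∧ b i < a j then 1 else 0) -
        (if i < j ∧ 0 < a i ∧ a i < a j then 1 else 0)) : ℤ) +
      (2 * (if i < j ∧ a i < a j ∧ a j < b i then 1 else 0) +
        (if i < j ∧ a j = a i then 1 else 0)) =
      (if a i < a j ∧ a j < b i then 1 else 0) + if a i = 0 ∧ i < j then 1 else 0 := by
    intro j
    rcases eq_or_ne j i with rfl | hj
    · simp
    have hv := apply_ne_of_raise hb hne hlt hj
    have hu : a j ≠ 0 → a j ≠ a i := ha.2 j i hj
    have : j < i ∨ i < j := lt_or_gt_of_ne hj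
    split_ifs <;> omega
  have hcount := sum_congr rfl fun j (_ : j ∈ univ) => hpoint j
  simp only [sum_add_distrib, ← mul_sum, ← natCast_card_filter,
    ← coinv_sub_coinv_of_eq_off hne] at hcount
  have hzero : #{j | a i = 0 ∧ i < j} = if a i = 0 then #{j | i < j} else 0 := by
    split_ifs with h <;> simp [h]
  rw [← hzero]
  linarith

theorem rookLen_sub_rookLen_of_raise (ha : IsRook n a) (hb : IsRook n b)
    (hne : ∀ k, k ≠ i → a k = b k) (hlt : a i < b i) :
    rookLen n b - rookLen n a = 1 + #{w ∈ Ioo (a i) (b i) | ∀ j, a j ≠ w} +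
      2 * #{j | i < j ∧ a i < a j ∧ a j < b i} + #{j | i < j ∧ a j = a i} := by
  -- `convert` reconciles the decidability instance of `∀ j, a j ≠ w` found for `Fin n`
  -- with the one of the general lemma.
  have hvalues : b i - a i - 1 = #{w ∈ Ioo (a i) (b i) | ∀ j, a j ≠ w} +
      #{j | a i < a j ∧ a j < b i} := by
    convert card_Ioo_eq_card_missing_add_card_preimage ha.injOn (a i) (b i)
  have hlater : #{j | i < j} = n - 1 - i := by
    rw [filter_lt_eq_Ioi, Fin.card_Ioi]
  rw [rookLen_sub_rookLen_of_eq_off hne (by omega), coinv_sub_coinv_of_raise ha hb hne hlt]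
  split_ifs <;> omega

theorem rookLen_eq_add_one_iff (ha : IsRook n a) (hb : IsRook n b)
    (hne : ∀ k, k ≠ i → a k = b k) (hlt : a i < b i) :
    rookLen n b = rookLen n a + 1 ↔ IsCoveringRaise a i (b i) := by
  have hlen := rookLen_sub_rookLen_of_raise ha hb hne hlt
  have hvanish : rookLen n b = rookLen n a + 1 ↔
      #{w ∈ Ioo (a i) (b i) | ∀ j, a j ≠ w} = 0 ∧ #{j | i < j ∧ a i < a j ∧ a j < b i} = 0 ∧
        #{j | i < j ∧ a j = a i} = 0 := by
    omega
  rw [hvanish, card_eq_zero, card_eq_zero, card_eq_zero, filter_eq_empty_iff, filter_eq_empty_iff,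
    filter_eq_empty_iff, IsCoveringRaise, Set.subset_def]
  simp only [mem_Ioo, Set.mem_Ioo, Set.mem_range, Set.mem_Ico, mem_univ, true_imp_iff, ne_eq,
    not_forall, not_not, not_and, not_lt]
  refine and_congr_right fun _ => ⟨fun ⟨hL, hZ⟩ j hij hle => ?_,
    fun h => ⟨fun j hij hlow => h j hij hlow.le, fun j hij heq => ?_⟩⟩
  · rcases hle.lt_or_eq with hlow | heq
    · exact hL hij hlow
    · exact absurd heq.symm (hZ hij)
  · have := h j hij heq.ge
    omega

end length

theorem deodharCovers_iff_isCoveringRaise {n : ℕ} {a b : Fin n → ℕ} {i : Fin n}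
    (ha : IsRook n a) (hb : IsRook n b) (hne : ∀ k, k ≠ i → a k = b k) (hlt : a i < b i) :
    deodharCovers n a b ↔ IsCoveringRaise a i (b i) := by
  refine ⟨fun hcov => ⟨fun w ⟨hw, hwb⟩ => ?_, fun j hij ⟨hlow, hhigh⟩ => ?_⟩, fun hcov => ?_⟩
  · by_contra hmiss
    exact not_deodharCovers_of_missing ha hb hne hw hwb (fun j h => hmiss ⟨j, h⟩) hcov
  · rcases hlow.lt_or_eq with hlow | heq
    · exact not_deodharCovers_of_later_between ha hb hne hlt hij hlow hhigh hcov
    · have hj : a j = 0 := by_contra fun h => ha.2 j i hij.ne' h heq.symm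
      exact not_deodharCovers_of_later_zero ha hb hne hlt (heq.trans hj) hij hj hcov
  · refine ⟨deodharLE_of_eq_off hne hlt.le, fun h => hlt.ne (congrFun h i), ?_⟩
    rintro ⟨z, hz, haz, hza, hzb, hzb'⟩
    exact (eq_or_eq_of_deodharLE_of_deodharLE hb hne hlt hcov hz haz hzb).elim
      (fun h => hza h.symm) hzb'

theorem raise_len_iff_covers (n : ℕ) (a b : Fin n → ℕ) (ha : IsRook n a) (hb : IsRook n b)
    (i : Fin n) (hne : ∀ k, k ≠ i → a k = b k) (hlt : a i < b i) :
    rookLen n b = rookLen n a + 1 ↔ deodharCovers n a b := by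
  rw [rookLen_eq_add_one_iff ha hb hne hlt, deodharCovers_iff_isCoveringRaise ha hb hne hlt]
end

section
/- Let T_n be the space of upper triangular n×n matrices over a field F, and x a partial permutation matrix. Then x·T_n is the linear subspace of M_n(F) spanned by the elementary matrices E_{ij} for which x has a nonzero entry in position (i, s) with s ≤ j. -/
/-- A partial permutation matrix: 0-1 entries with at most one nonzero entry
in each row and each column. -/
def IsPartialPerm {n : ℕ} {F : Type*} [Field F] (x : Matrix (Fin n) (Fin n) F) : Prop :=
  (∀ i j, x i j = 0 ∨ x i j = 1) ∧
  (∀ i j j', x i j ≠ 0 → x i j' ≠ 0 → j = j') ∧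
  (∀ i i' j, x i j ≠ 0 → x i' j ≠ 0 → i = i')

/-- The subspace of upper triangular matrices. -/
def upperT (F : Type*) [Field F] (n : ℕ) : Submodule F (Matrix (Fin n) (Fin n) F) where
  carrier := {t | ∀ i j : Fin n, j < i → t i j = 0}
  add_mem' := by
    intro a b ha hb i j hij
    simp [Matrix.add_apply, ha i j hij, hb i j hij]
  zero_mem' := by
    intro i j hij
    simp
  smul_mem' := by
    intro c a ha i j hij
    simp [Matrix.smul_apply, ha i j hij]
/-!
Every column of a partial permutation matrix `x` is zero or a standard basis vector, so
`x * E_{sj} = E_{ij}` whenever `x i s ≠ 0`; with `s ≤ j` these products lie in `x * T_n`.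
Conversely `(x * t) i j = ∑ₛ x i s * t s j` can only be nonzero through a term with
`x i s ≠ 0` and `t s j ≠ 0`, and the latter forces `s ≤ j` for upper triangular `t`.
-/

open Matrix

section

variable {F : Type*} [Field F] {n : ℕ}

theorem single_mem_upperT {s j : Fin n} (hsj : s ≤ j) (c : F) : single s j c ∈ upperT F n := by
  intro a b hba
  have : ¬(s = a ∧ j = b) := by rintro ⟨rfl, rfl⟩; exact hba.not_ge hsj
  simp [single, this]

theorem Matrix.mem_span_single_of_ne_zero {ι R : Type*} [Fintype ι] [DecidableEq ι] [Semiring R]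
    {S : Set (Matrix ι ι R)} (m : Matrix ι ι R)
    (hm : ∀ i j, m i j ≠ 0 → single i j 1 ∈ S) : m ∈ Submodule.span R S := by
  rw [matrix_eq_sum_single m]
  refine Submodule.sum_mem _ fun i _ => Submodule.sum_mem _ fun j _ => ?_
  by_cases h : m i j = 0
  · simp [h]
  · rw [← mul_one (m i j), ← smul_eq_mul, ← smul_single]
    exact Submodule.smul_mem _ _ (Submodule.subset_span (hm i j h))

theorem IsPartialPerm.apply_eq_ite {x : Matrix (Fin n) (Fin n) F} (hx : IsPartialPerm x)
    {i s : Fin n} (his : x i s ≠ 0) (a : Fin n) : x a s = if a = i then 1 else 0 := by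
  split_ifs with hai
  · subst hai; exact (hx.1 a s).resolve_left his
  · by_contra has; exact hai (hx.2.2 a i s has his)

theorem IsPartialPerm.mul_single_one {x : Matrix (Fin n) (Fin n) F} (hx : IsPartialPerm x)
    {i s : Fin n} (his : x i s ≠ 0) (j : Fin n) : x * single s j 1 = single i j 1 := by
  ext a b
  by_cases hbj : b = j
  · subst hbj
    rw [mul_single_apply_same, mul_one, hx.apply_eq_ite his a]
    simp [single, eq_comm]
  · rw [mul_single_apply_of_ne _ _ _ _ _ hbj]
    simp [single, Ne.symm hbj]

theorem Matrix.exists_ne_zero_of_mul_apply_ne_zero {l m o R : Type*} [Fintype m]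
    [NonUnitalNonAssocSemiring R] {x : Matrix l m R} {t : Matrix m o R} {i : l} {j : o}
    (h : (x * t) i j ≠ 0) : ∃ s, x i s ≠ 0 ∧ t s j ≠ 0 := by
  obtain ⟨s, -, hs⟩ := Finset.exists_ne_zero_of_sum_ne_zero (mul_apply (M := x) ▸ h)
  exact ⟨s, left_ne_zero_of_mul hs, right_ne_zero_of_mul hs⟩

theorem map_mulLeft_upperT_le_span (x : Matrix (Fin n) (Fin n) F) :
    (upperT F n).map (LinearMap.mulLeft F x) ≤
      Submodule.span F {E | ∃ i j s : Fin n, s ≤ j ∧ x i s ≠ 0 ∧ E = single i j 1} := by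
  rintro _ ⟨t, ht, rfl⟩
  refine mem_span_single_of_ne_zero _ fun i j hij => ?_
  obtain ⟨s, hxs, hts⟩ := exists_ne_zero_of_mul_apply_ne_zero (x := x) (t := t) hij
  exact ⟨i, j, s, not_lt.mp fun hjs => hts (ht s j hjs), hxs, rfl⟩

theorem IsPartialPerm.span_le_map_mulLeft_upperT {x : Matrix (Fin n) (Fin n) F}
    (hx : IsPartialPerm x) :
    Submodule.span F {E | ∃ i j s : Fin n, s ≤ j ∧ x i s ≠ 0 ∧ E = single i j 1} ≤
      (upperT F n).map (LinearMap.mulLeft F x) := by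
  rw [Submodule.span_le]
  rintro _ ⟨i, j, s, hsj, hxs, rfl⟩
  exact ⟨single s j 1, single_mem_upperT hsj 1, hx.mul_single_one hxs j⟩

end

theorem xT_spanned (F : Type*) [Field F] (n : ℕ) (x : Matrix (Fin n) (Fin n) F)
    (hx : IsPartialPerm x) :
    (upperT F n).map (LinearMap.mulLeft F x) =
      Submodule.span F {E : Matrix (Fin n) (Fin n) F |
        ∃ i j s : Fin n, s ≤ j ∧ x i s ≠ 0 ∧ E = Matrix.single i j 1} :=
  (map_mulLeft_upperT_le_span x).antisymm hx.span_le_map_mulLeft_upperT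
end

section
/- For a partial permutation matrix x with one-line encoding (a_1,...,a_n), the dimension of the intersection T_n x ∩ x T_n (T_n the upper triangular matrices) equals rank(x) + coinv(x), where rank(x) is the number of nonzero entries of x and coinv(x) = #{(i,j) : i < j, 0 < a_i < a_j}. -/
section SupportedMatrices

open Finset

variable {R m n : Type*}

variable (R) in
def supportedMatrices [Semiring R] (Q : m → n → Prop) : Submodule R (Matrix m n R) where
  carrier := {M | ∀ i j, ¬ Q i j → M i j = 0}
  add_mem' hM hN i j h := by simp [hM i j h, hN i j h]
  zero_mem' _ _ _ := rfl
  smul_mem' c M hM i j h := by simp [hM i j h]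

theorem mem_supportedMatrices [Semiring R] {Q : m → n → Prop} {M : Matrix m n R} :
    M ∈ supportedMatrices R Q ↔ ∀ i j, ¬ Q i j → M i j = 0 :=
  Iff.rfl

theorem supportedMatrices_inf [Semiring R] (P Q : m → n → Prop) :
    supportedMatrices R P ⊓ supportedMatrices R Q =
      supportedMatrices R (fun i j => P i j ∧ Q i j) := by
  ext M
  simp only [Submodule.mem_inf, mem_supportedMatrices, not_and_or]
  exact ⟨fun h i j => (Or.elim · (h.1 i j) (h.2 i j)),
    fun h => ⟨fun i j hP => h i j (.inl hP), fun i j hQ => h i j (.inr hQ)⟩⟩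

def supportedMatricesEquiv [Semiring R] (Q : m → n → Prop) [∀ i j, Decidable (Q i j)] :
    supportedMatrices R Q ≃ₗ[R] ({p : m × n // Q p.1 p.2} → R) where
  toFun M p := M.1 p.1.1 p.1.2
  map_add' _ _ := rfl
  map_smul' _ _ := rfl
  invFun f := ⟨fun i j => if h : Q i j then f ⟨(i, j), h⟩ else 0, fun i j h => dif_neg h⟩
  left_inv M := by
    ext i j
    by_cases h : Q i j
    · simp [h]
    · simp [h, M.2 i j h]
  right_inv f := by
    ext p
    simp [p.2]

theorem finrank_supportedMatrices [Ring R] [StrongRankCondition R] [Fintype m] [Fintype n]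
    (Q : m → n → Prop) [∀ i j, Decidable (Q i j)] :
    Module.finrank R (supportedMatrices R Q) = #{p : m × n | Q p.1 p.2} := by
  rw [(supportedMatricesEquiv Q).finrank_eq, Module.finrank_fintype_fun_eq_card,
    Fintype.card_subtype]

end SupportedMatrices

namespace IsPartialPerm

open scoped Matrix

variable {F : Type*} [Field F] {n : ℕ} {x : Matrix (Fin n) (Fin n) F}

theorem transpose (hx : IsPartialPerm x) : IsPartialPerm xᵀ :=
  ⟨fun i j => hx.1 j i, fun i j j' => hx.2.2 j j' i, fun i i' j => hx.2.1 j i i'⟩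

theorem eq_one_of_ne_zero (hx : IsPartialPerm x) {i j : Fin n} (h : x i j ≠ 0) : x i j = 1 :=
  (hx.1 i j).resolve_left h

theorem sum_col_eq_one (hx : IsPartialPerm x) {k j : Fin n} (h : x k j ≠ 0) :
    ∑ i, x i j = 1 := by
  rw [Finset.sum_eq_single_of_mem k (Finset.mem_univ k) fun i _ hik => by
    by_contra hi; exact hik (hx.2.2 i k j hi h)]
  exact hx.eq_one_of_ne_zero h

theorem transpose_mul_self (hx : IsPartialPerm x) :
    xᵀ * x = Matrix.diagonal fun j => ∑ i, x i j := by
  ext j j'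
  simp only [Matrix.mul_apply, Matrix.transpose_apply, Matrix.diagonal_apply]
  split_ifs with h
  · subst h
    refine Finset.sum_congr rfl fun i _ => ?_
    rcases hx.1 i j with h0 | h1 <;> simp [*]
  · refine Finset.sum_eq_zero fun i _ => ?_
    by_contra hne
    exact h (hx.2.1 i j j' (left_ne_zero_of_mul hne) (right_ne_zero_of_mul hne))

theorem mul_transpose_self (hx : IsPartialPerm x) :
    x * xᵀ = Matrix.diagonal fun i => ∑ j, x i j := by
  simpa using hx.transpose.transpose_mul_self

theorem map_mulRight_upperT (hx : IsPartialPerm x) :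
    (upperT F n).map (LinearMap.mulRight F x) =
      supportedMatrices F (fun i j => ∃ k, i ≤ k ∧ x k j ≠ 0) := by
  apply le_antisymm
  · rintro _ ⟨t, ht, rfl⟩ i j hij
    push Not at hij
    rw [LinearMap.mulRight_apply, Matrix.mul_apply]
    refine Finset.sum_eq_zero fun k _ => ?_
    by_cases hk : x k j = 0
    · simp [hk]
    · simp [ht i k (lt_of_not_ge fun hik => hk (hij k hik))]
  · intro M hM
    refine ⟨M * xᵀ, fun i k hki => ?_, ?_⟩
    · refine (Matrix.mul_apply ..).trans (Finset.sum_eq_zero fun j _ => ?_)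
      by_cases hk : x k j = 0
      · simp [hk]
      · rw [hM i j fun ⟨k', hik', hk'⟩ => (hx.2.2 k k' j hk hk' ▸ hki).not_ge hik']
        simp
    · ext i j
      simp only [LinearMap.mulRight_apply, Matrix.mul_assoc, hx.transpose_mul_self,
        Matrix.mul_diagonal]
      by_cases hij : M i j = 0
      · simp [hij]
      · obtain ⟨k, -, hk⟩ := not_not.1 (mt (hM i j) hij)
        rw [hx.sum_col_eq_one hk, mul_one]

theorem map_mulLeft_upperT (hx : IsPartialPerm x) :
    (upperT F n).map (LinearMap.mulLeft F x) =
      supportedMatrices F (fun i j => ∃ k, x i k ≠ 0 ∧ k ≤ j) := by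
  apply le_antisymm
  · rintro _ ⟨s, hs, rfl⟩ i j hij
    push Not at hij
    rw [LinearMap.mulLeft_apply, Matrix.mul_apply]
    refine Finset.sum_eq_zero fun k _ => ?_
    by_cases hk : x i k = 0
    · simp [hk]
    · simp [hs k j (hij k hk)]
  · intro M hM
    refine ⟨xᵀ * M, fun k j hjk => ?_, ?_⟩
    · refine (Matrix.mul_apply ..).trans (Finset.sum_eq_zero fun i _ => ?_)
      by_cases hk : x i k = 0
      · simp [hk]
      · rw [hM i j fun ⟨k', hk', hk'j⟩ => (hx.2.1 i k k' hk hk' ▸ hjk).not_ge hk'j]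
        simp
    · ext i j
      simp only [LinearMap.mulLeft_apply, ← Matrix.mul_assoc, hx.mul_transpose_self,
        Matrix.diagonal_mul]
      by_cases hij : M i j = 0
      · simp [hij]
      · obtain ⟨k, hk, -⟩ := not_not.1 (mt (hM i j) hij)
        rw [show ∑ j, x i j = 1 from hx.transpose.sum_col_eq_one (k := k) hk, one_mul]

end IsPartialPerm

section Coinversions

open Finset

variable {n : ℕ} {a : Fin n → ℕ}

theorem card_weakPairs_eq (ha : Set.InjOn a {j | a j ≠ 0}) :
    #{p : Fin n × Fin n | p.1 ≤ p.2 ∧ 0 < a p.1 ∧ a p.1 ≤ a p.2} = #{j | a j ≠ 0} + coinv n a := by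
  rw [← card_filter_add_card_filter_not (fun p : Fin n × Fin n => p.1 = p.2), filter_filter,
    filter_filter, coinv]
  congr 1
  · refine card_nbij' Prod.fst (fun j => (j, j)) ?_ ?_ ?_ ?_
    · intro p hp
      simp only [coe_filter, mem_univ, true_and, Set.mem_ofPred_eq] at hp ⊢
      exact hp.1.2.1.ne'
    · intro j hj
      simpa [Nat.pos_iff_ne_zero] using hj
    · simp +contextual [Set.LeftInvOn, Prod.ext_iff]
    · simp [Set.RightInvOn, Set.LeftInvOn]
  · congr 1
    ext ⟨c, j⟩
    simp only [mem_filter, mem_univ, true_and]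
    constructor
    · rintro ⟨⟨hcj, hc, hle⟩, hne⟩
      exact ⟨lt_of_le_of_ne hcj hne, hc, lt_of_le_of_ne hle fun h => hne (ha hc.ne' (by
        simp [← h, hc.ne']) h)⟩
    · rintro ⟨hcj, hc, hlt⟩
      exact ⟨⟨hcj.le, hc, hlt.le⟩, hcj.ne⟩

theorem card_codePairs_eq_card_weakPairs (hbd : ∀ j, a j ≤ n) (ha : Set.InjOn a {j | a j ≠ 0}) :
    #{p : Fin n × Fin n | p.1.val < a p.2 ∧ ∃ k ≤ p.2, a k = p.1.val + 1} =
      #{p : Fin n × Fin n | p.1 ≤ p.2 ∧ 0 < a p.1 ∧ a p.1 ≤ a p.2} := by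
  symm
  refine card_nbij (fun p => (⟨a p.1 - 1, by have := hbd p.1; have := p.1.isLt; omega⟩, p.2))
    ?_ ?_ ?_
  · rintro ⟨c, j⟩ hcj
    simp only [coe_filter, mem_univ, true_and, Set.mem_ofPred_eq] at hcj ⊢
    exact ⟨by omega, c, hcj.1, by omega⟩
  · rintro ⟨c, j⟩ hcj ⟨c', j'⟩ hcj' h
    simp only [coe_filter, mem_univ, true_and, Set.mem_ofPred_eq, Prod.mk.injEq, Fin.mk.injEq]
      at hcj hcj' h
    exact Prod.ext (ha hcj.2.1.ne' hcj'.2.1.ne' (by dsimp only; omega)) h.2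
  · rintro ⟨i, j⟩ hij
    simp only [coe_filter, mem_univ, true_and, Set.mem_ofPred_eq] at hij
    obtain ⟨hi, k, hkj, hk⟩ := hij
    refine ⟨(k, j), by simp only [coe_filter, mem_univ, true_and, Set.mem_ofPred_eq]; omega, ?_⟩
    simp only [Prod.mk.injEq, Fin.ext_iff, and_true]
    omega

end Coinversions

section ColumnCode

variable {F : Type*} {n : ℕ} {x : Matrix (Fin n) (Fin n) F} {a : Fin n → ℕ}

theorem exists_le_and_ne_zero_iff_lt [Zero F] (hbd : ∀ j, a j ≤ n)
    (hcode : ∀ j i : Fin n, x i j ≠ 0 ↔ a j = i.val + 1) {i j : Fin n} :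
    (∃ k, i ≤ k ∧ x k j ≠ 0) ↔ i.val < a j := by
  simp only [hcode, Fin.le_def]
  constructor
  · rintro ⟨k, hik, hk⟩
    omega
  · intro hi
    exact ⟨⟨a j - 1, by have := hbd j; omega⟩, by dsimp only; omega, by dsimp only; omega⟩

theorem IsPartialPerm.injOn_code [Field F] (hx : IsPartialPerm x) (hbd : ∀ j, a j ≤ n)
    (hcode : ∀ j i : Fin n, x i j ≠ 0 ↔ a j = i.val + 1) : Set.InjOn a {j | a j ≠ 0} := by
  intro j (hj : a j ≠ 0) j' _ h
  let r : Fin n := ⟨a j - 1, by have := hbd j; have := j.isLt; omega⟩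
  have hr : a j = r.val + 1 := by simp only [r]; omega
  exact hx.2.1 r j j' ((hcode j r).2 hr) ((hcode j' r).2 (h ▸ hr))

end ColumnCode

theorem dim_intersection (F : Type*) [Field F] (n : ℕ) (x : Matrix (Fin n) (Fin n) F)
    (hx : IsPartialPerm x) (a : Fin n → ℕ) (hbd : ∀ j, a j ≤ n)
    (hcode : ∀ j i : Fin n, x i j ≠ 0 ↔ a j = i.val + 1) :
    Module.finrank F
      ↥((upperT F n).map (LinearMap.mulRight F x) ⊓
        (upperT F n).map (LinearMap.mulLeft F x)) =
      (Finset.univ.filter (fun j : Fin n => a j ≠ 0)).card + coinv n a := by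
  classical
  have ha := hx.injOn_code hbd hcode
  rw [hx.map_mulRight_upperT, hx.map_mulLeft_upperT, supportedMatrices_inf,
    finrank_supportedMatrices, ← card_weakPairs_eq ha, ← card_codePairs_eq_card_weakPairs hbd ha]
  congr 1
  refine Finset.filter_congr fun p _ => ?_
  rw [exists_le_and_ne_zero_iff_lt hbd hcode]
  simp only [hcode, and_comm]
end

section
/- For a partial permutation matrix x with one-line encoding (a_1,...,a_n), dim(T_n x) = ∑_{j=1}^n a_j and dim(x T_n) = ∑_{j: a_j ≠ 0} (n − j + 1), where T_n is the space of upper triangular n×n matrices. -/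
/-!
Every `j` with `a j ≠ 0` contributes a single entry `1` at `(a j - 1, j)` to `x`. Hence
`t * x` moves column `a j - 1` of `t` to column `j`, so for upper triangular `t` the products
`t * x` are exactly the matrices supported on `{(i, j) | i < a j}`. Likewise `x * t` moves row
`k` of `t` to row `a k - 1`, so the products `x * t` are the matrices supported on
`{(a k - 1, j) | a k ≠ 0, k ≤ j}`. The reverse inclusions hold because `xᵀ * x` and `x * xᵀ`
are the diagonal projections onto the nonzero columns and rows of `x`. Each dimension is then
the size of the support, which is counted column by column, resp. row by row.
-/

open Finset Matrix

namespace Matrix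

variable {m n R : Type*} [Fintype m] [Fintype n] [Semiring R]

variable (R) in
noncomputable def supportedOn (S : Finset (m × n)) : Submodule R (Matrix m n R) :=
  (Pi.spanSubset R (S : Set (m × n))).map
    ((LinearEquiv.curry R R m n).trans (ofLinearEquiv R)).toLinearMap

theorem mem_supportedOn {S : Finset (m × n)} {M : Matrix m n R} :
    M ∈ supportedOn R S ↔ ∀ i j, (i, j) ∉ S → M i j = 0 := by
  simp [supportedOn, Submodule.mem_map_equiv, Pi.mem_spanSubset_iff]

theorem finrank_supportedOn [StrongRankCondition R] (S : Finset (m × n)) :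
    Module.finrank R (supportedOn R S) = #S := by
  have := nontrivial_of_invariantBasisNumber R
  rw [supportedOn, LinearEquiv.finrank_map_eq, Pi.dim_spanSubset, Set.ncard_coe_finset]

end Matrix

section PartialPermMatrix

variable {R : Type*} {n : ℕ}

def partialPermMatrix [Zero R] [One R] (a : Fin n → ℕ) : Matrix (Fin n) (Fin n) R :=
  of fun i j => if a j = i.val + 1 then 1 else 0

@[simp]
theorem partialPermMatrix_apply [Zero R] [One R] (a : Fin n → ℕ) (i j : Fin n) :
    (partialPermMatrix a : Matrix (Fin n) (Fin n) R) i j = if a j = i.val + 1 then 1 else 0 :=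
  rfl

variable {a : Fin n → ℕ}

section OneLineCode

variable [Zero R] {x : Matrix (Fin n) (Fin n) R}
  (hcode : ∀ j i : Fin n, x i j ≠ 0 ↔ a j = i.val + 1)
include hcode

theorem eq_partialPermMatrix_of_code [One R] (h01 : ∀ i j, x i j = 0 ∨ x i j = 1) :
    x = partialPermMatrix a := by
  ext i j
  rcases h01 i j with h | h <;> simp [h, ← hcode j i]

theorem injOn_of_code (hrow : ∀ i j j', x i j ≠ 0 → x i j' ≠ 0 → j = j')
    (hbd : ∀ j, a j ≤ n) :
    Set.InjOn a {j | a j ≠ 0} := by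
  intro j hj j' _ hjj'
  obtain ⟨i, hi⟩ := Nat.exists_eq_succ_of_ne_zero hj
  have hin : i < n := by have := hbd j; omega
  exact hrow ⟨i, hin⟩ j j' ((hcode _ _).2 hi) ((hcode _ _).2 (hjj' ▸ hi))

end OneLineCode

section Products

variable (ha : Set.InjOn a {j | a j ≠ 0})
include ha

theorem transpose_mul_partialPermMatrix [NonAssocSemiring R] (hbd : ∀ j, a j ≤ n) :
    (partialPermMatrix a)ᵀ * partialPermMatrix a =
      diagonal fun j => if a j = 0 then 0 else (1 : R) := by
  ext j j'
  simp only [mul_apply, transpose_apply, partialPermMatrix_apply, mul_ite, mul_one, mul_zero,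
    diagonal_apply]
  by_cases hj : a j = 0
  · simp [hj]
  obtain ⟨i, hi⟩ : ∃ i : Fin n, a j = i.val + 1 :=
    ⟨⟨a j - 1, by have := hbd j; omega⟩, by rw [Fin.val_mk]; omega⟩
  have hk : ∀ k : Fin n, a j = k.val + 1 ↔ k = i := fun k => by rw [hi, Fin.ext_iff]; omega
  rw [Fintype.sum_eq_single i fun k hki => by simp [hk, hki], ← hi]
  by_cases hjj : j = j'
  · subst hjj
    simp [hj]
  · have : a j' ≠ a j := fun h => hjj (ha (by simpa [h] using hj) hj h).symm
    simp [this, hjj]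

theorem partialPermMatrix_mul_transpose [NonAssocSemiring R] :
    partialPermMatrix a * (partialPermMatrix a)ᵀ =
      diagonal fun i => if ∃ k, a k = i.val + 1 then (1 : R) else 0 := by
  ext i i'
  simp only [mul_apply, transpose_apply, partialPermMatrix_apply, mul_ite, mul_one, mul_zero,
    diagonal_apply]
  by_cases hi : ∃ k, a k = i.val + 1
  · obtain ⟨k, hk⟩ := hi
    have huniq : ∀ k', a k' = i.val + 1 → k' = k := fun k' hk' =>
      ha (by simp [hk']) (by simp [hk]) (hk'.trans hk.symm)
    rw [Fintype.sum_eq_single k fun k' hk' => by simp [mt (huniq k') hk']]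
    by_cases hii : i = i'
    · subst hii
      simp [hk, show ∃ k, a k = i.val + 1 from ⟨k, hk⟩]
    · simp [hk, hii, Fin.val_inj]
  · push Not at hi
    simp [hi]

theorem map_mulRight_upperT {F : Type*} [Field F] (hbd : ∀ j, a j ≤ n) :
    (upperT F n).map (LinearMap.mulRight F (partialPermMatrix a)) =
      supportedOn F {p : Fin n × Fin n | p.1.val < a p.2} := by
  apply le_antisymm
  · rintro _ ⟨t, ht, rfl⟩
    rw [mem_supportedOn]
    intro i j hij
    simp only [mem_filter, mem_univ, true_and, not_lt] at hij
    simp only [LinearMap.mulRight_apply, mul_apply, partialPermMatrix_apply, mul_ite, mul_one,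
      mul_zero]
    refine sum_eq_zero fun k _ => ite_eq_right_iff.2 fun hk => ht i k ?_
    rw [Fin.lt_def]
    omega
  · intro m hm
    rw [mem_supportedOn] at hm
    refine ⟨m * (partialPermMatrix a)ᵀ, fun i k hki => ?_, ?_⟩
    · simp only [mul_apply, transpose_apply, partialPermMatrix_apply, mul_ite, mul_one, mul_zero]
      refine sum_eq_zero fun j _ => ite_eq_right_iff.2 fun hj => hm i j ?_
      simp only [mem_filter, mem_univ, true_and, not_lt]
      rw [Fin.lt_def] at hki
      omega
    · ext i j
      rw [LinearMap.mulRight_apply, Matrix.mul_assoc, transpose_mul_partialPermMatrix ha hbd,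
        mul_diagonal]
      split_ifs with hj
      · rw [hm i j (by simp [hj]), mul_zero]
      · rw [mul_one]

theorem map_mulLeft_upperT {F : Type*} [Field F] :
    (upperT F n).map (LinearMap.mulLeft F (partialPermMatrix a)) =
      supportedOn F {p : Fin n × Fin n | ∃ k, a k = p.1.val + 1 ∧ k ≤ p.2} := by
  apply le_antisymm
  · rintro _ ⟨t, ht, rfl⟩
    rw [mem_supportedOn]
    intro i j hij
    simp only [mem_filter, mem_univ, true_and, not_exists, not_and, not_le] at hij
    simp only [LinearMap.mulLeft_apply, mul_apply, partialPermMatrix_apply, ite_mul, one_mul,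
      zero_mul]
    exact sum_eq_zero fun k _ => ite_eq_right_iff.2 fun hk => ht k j (hij k hk)
  · intro m hm
    rw [mem_supportedOn] at hm
    refine ⟨(partialPermMatrix a)ᵀ * m, fun k j hjk => ?_, ?_⟩
    · simp only [mul_apply, transpose_apply, partialPermMatrix_apply, ite_mul, one_mul, zero_mul]
      refine sum_eq_zero fun i _ => ite_eq_right_iff.2 fun hk => hm i j ?_
      simp only [mem_filter, mem_univ, true_and, not_exists, not_and, not_le]
      intro k' hk'
      rwa [ha (by simp [hk']) (by simp [hk]) (hk'.trans hk.symm)]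
    · ext i j
      rw [LinearMap.mulLeft_apply, ← Matrix.mul_assoc, partialPermMatrix_mul_transpose ha,
        diagonal_mul]
      split_ifs with hi
      · rw [one_mul]
      · push Not at hi
        rw [hm i j (by simp [hi]), mul_zero]

end Products

theorem card_filter_val_lt_code (hbd : ∀ j, a j ≤ n) :
    #{p : Fin n × Fin n | p.1.val < a p.2} = ∑ j, a j := by
  rw [card_filter, Fintype.sum_prod_type_right]
  refine sum_congr rfl fun j _ => ?_
  dsimp only
  rw [sum_boole, Nat.cast_id, Fin.card_filter_val_lt, min_eq_right (hbd j)]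

theorem card_filter_exists_code (ha : Set.InjOn a {j | a j ≠ 0}) (hbd : ∀ j, a j ≤ n) :
    #{p : Fin n × Fin n | ∃ k, a k = p.1.val + 1 ∧ k ≤ p.2} =
      ∑ k with a k ≠ 0, (n - k.val) := by
  calc #{p : Fin n × Fin n | ∃ k, a k = p.1.val + 1 ∧ k ≤ p.2}
      = #{q : Fin n × Fin n | a q.1 ≠ 0 ∧ q.1 ≤ q.2} := by
        refine (card_bij (fun q _ => (⟨a q.1 - 1, by have := hbd q.1; have := q.1.isLt; omega⟩,
          q.2)) ?_ ?_ ?_).symm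
        · intro q hq
          simp only [mem_filter, mem_univ, true_and] at hq ⊢
          exact ⟨q.1, by omega, hq.2⟩
        · intro q hq q' hq' hqq'
          simp only [mem_filter, mem_univ, true_and] at hq hq'
          simp only [Prod.mk.injEq, Fin.mk.injEq] at hqq'
          exact Prod.ext (ha hq.1 hq'.1 (by omega)) hqq'.2
        · intro p hp
          simp only [mem_filter, mem_univ, true_and] at hp
          obtain ⟨k, hk, hkp⟩ := hp
          exact ⟨(k, p.2), by simp [hk, hkp], Prod.ext (Fin.ext (by simp [hk])) rfl⟩
    _ = ∑ k with a k ≠ 0, (n - k.val) := by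
        rw [card_filter, Fintype.sum_prod_type, sum_filter]
        refine sum_congr rfl fun k _ => ?_
        by_cases hk : a k = 0
        · simp [hk]
        · simp only [ne_eq, hk, not_false_eq_true, true_and, if_true]
          rw [sum_boole, Nat.cast_id, filter_le_eq_Ici, Fin.card_Ici]

end PartialPermMatrix

theorem dim_Tx_and_xT (F : Type*) [Field F] (n : ℕ) (x : Matrix (Fin n) (Fin n) F)
    (hx : IsPartialPerm x) (a : Fin n → ℕ) (hbd : ∀ j, a j ≤ n)
    (hcode : ∀ j i : Fin n, x i j ≠ 0 ↔ a j = i.val + 1) :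
    Module.finrank F ↥((upperT F n).map (LinearMap.mulRight F x)) = ∑ j : Fin n, a j ∧
    Module.finrank F ↥((upperT F n).map (LinearMap.mulLeft F x)) =
      ∑ j ∈ Finset.univ.filter (fun j : Fin n => a j ≠ 0), (n - j.val) := by
  have ha := injOn_of_code hcode hx.2.1 hbd
  rw [eq_partialPermMatrix_of_code hcode hx.1, map_mulRight_upperT ha hbd, map_mulLeft_upperT ha,
    finrank_supportedOn, finrank_supportedOn]
  exact ⟨card_filter_val_lt_code hbd, card_filter_exists_code ha hbd⟩
end
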